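/- arXiv:2507.03817 — 12 statements merged into one kernel-verified Lean document; each statement's English description precedes it below -/
import Mathlib

section
/- Consider a one-red instance in which every feature belongs to at least one exemplar. If S' ⊆ S is a subcollection and some blue feature b ∈ B satisfies b ∉ ⋃_{E∈S'} E, then there exists an exemplar E ∈ S \ S' such that the margin of S' ∪ {E} is at least the margin of S'. -/
/-- The margin of a subcollection `S'` of exemplars in a TAP instance with
ground set `U` and target `T`. -/
def tapMargin {α : Type*} [DecidableEq α] (U T : Finset α) (S' : Finset (Finset α)) : ℤ :=
  (((S'.biUnion id) ∩ (U ∩ T)).card : ℤ) - (((S'.biUnion id) ∩ (U \ T)).card : ℤ)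

theorem stmt_2 {α : Type*} [DecidableEq α] (U T : Finset α) (hTU : T ⊆ U)
    (S : Finset (Finset α)) (hS : ∀ E ∈ S, E.Nonempty ∧ E ⊆ U)
    (honered : ∀ E ∈ S, (E ∩ (U \ T)).card = 1)
    (hocc : ∀ x ∈ U, ∃ E ∈ S, x ∈ E)
    (S' : Finset (Finset α)) (hS' : S' ⊆ S)
    (b : α) (hb : b ∈ U ∩ T) (hbnc : b ∉ S'.biUnion id) :
    ∃ E ∈ S, E ∉ S' ∧ tapMargin U T S' ≤ tapMargin U T (insert E S') := by
  obtain ⟨E, hES, hbE⟩ := hocc b (Finset.mem_inter.mp hb).1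
  have hEnotS' : E ∉ S' := by
    intro h
    exact hbnc (Finset.mem_biUnion.mpr ⟨E, h, hbE⟩)
  refine ⟨E, hES, hEnotS', ?_⟩
  set V := S'.biUnion id with hV
  have hW : (insert E S').biUnion id = E ∪ V := Finset.biUnion_insert
  -- blue gain
  have hblue : (V ∩ (U ∩ T)).card + 1 ≤ ((E ∪ V) ∩ (U ∩ T)).card := by
    have hsub : insert b (V ∩ (U ∩ T)) ⊆ (E ∪ V) ∩ (U ∩ T) := by
      intro x hx
      rcases Finset.mem_insert.mp hx with rfl | hx
      · exact Finset.mem_inter.mpr ⟨Finset.mem_union_left _ hbE, hb⟩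
      · have := Finset.mem_inter.mp hx
        exact Finset.mem_inter.mpr ⟨Finset.mem_union_right _ this.1, this.2⟩
    have hbnot : b ∉ V ∩ (U ∩ T) := fun h => hbnc (Finset.mem_inter.mp h).1
    calc (V ∩ (U ∩ T)).card + 1 = (insert b (V ∩ (U ∩ T))).card :=
          (Finset.card_insert_of_notMem hbnot).symm
      _ ≤ ((E ∪ V) ∩ (U ∩ T)).card := Finset.card_le_card hsub
  -- red loss
  have hred : ((E ∪ V) ∩ (U \ T)).card ≤ (V ∩ (U \ T)).card + 1 := by
    have : (E ∪ V) ∩ (U \ T) = (E ∩ (U \ T)) ∪ (V ∩ (U \ T)) :=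
      Finset.union_inter_distrib_right ..
    rw [this]
    calc ((E ∩ (U \ T)) ∪ (V ∩ (U \ T))).card
        ≤ (E ∩ (U \ T)).card + (V ∩ (U \ T)).card := Finset.card_union_le _ _
      _ = (V ∩ (U \ T)).card + 1 := by rw [honered E hES]; omega
  unfold tapMargin
  rw [hW, ← hV]
  push_cast
  omega
end

section
/- In a one-red instance in which every feature belongs to at least one exemplar, there exists an optimal subcollection S* ⊆ S such that B ⊆ ⋃_{E∈S*} E, i.e., an optimal subcollection that includes every blue feature. -/
theorem stmt_3 {α : Type*} [DecidableEq α] (U T : Finset α) (hTU : T ⊆ U)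
    (S : Finset (Finset α)) (hS : ∀ E ∈ S, E.Nonempty ∧ E ⊆ U)
    (honered : ∀ E ∈ S, (E ∩ (U \ T)).card = 1)
    (hocc : ∀ x ∈ U, ∃ E ∈ S, x ∈ E) :
    ∃ Sstar ⊆ S, (U ∩ T) ⊆ Sstar.biUnion id ∧
      ∀ S' ⊆ S, tapMargin U T S' ≤ tapMargin U T Sstar := by
  classical
  have hPne : (S.powerset).Nonempty := ⟨∅, Finset.empty_mem_powerset S⟩
  obtain ⟨S₀, hS₀P, hS₀max⟩ := S.powerset.exists_max_image (tapMargin U T) hPne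
  set O := S.powerset.filter
      (fun S' => ∀ S'' ∈ S.powerset, tapMargin U T S'' ≤ tapMargin U T S') with hOdef
  have hOne : O.Nonempty := ⟨S₀, Finset.mem_filter.mpr ⟨hS₀P, hS₀max⟩⟩
  obtain ⟨Sstar, hSstarO, hSstarmax⟩ :=
    O.exists_max_image (fun S' => (S'.biUnion id).card) hOne
  obtain ⟨hSsub, hopt⟩ := Finset.mem_filter.mp hSstarO
  refine ⟨Sstar, Finset.mem_powerset.mp hSsub, ?_,
    fun S' hS' => hopt S' (Finset.mem_powerset.mpr hS')⟩
  intro x hx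
  by_contra hxW
  obtain ⟨E, hES, hxE⟩ := hocc x (Finset.mem_inter.mp hx).1
  set S'' := insert E Sstar with hS''def
  have hS''P : S'' ∈ S.powerset :=
    Finset.mem_powerset.mpr (Finset.insert_subset hES (Finset.mem_powerset.mp hSsub))
  have hunion : S''.biUnion id = E ∪ Sstar.biUnion id := Finset.biUnion_insert
  have hge : tapMargin U T Sstar ≤ tapMargin U T S'' := by
    unfold tapMargin
    rw [hunion]
    have hblue : (Sstar.biUnion id ∩ (U ∩ T)).card + 1
        ≤ ((E ∪ Sstar.biUnion id) ∩ (U ∩ T)).card := by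
      have hx' : x ∈ (E ∪ Sstar.biUnion id) ∩ (U ∩ T) :=
        Finset.mem_inter.mpr ⟨Finset.mem_union_left _ hxE, hx⟩
      have hsub : insert x (Sstar.biUnion id ∩ (U ∩ T))
          ⊆ (E ∪ Sstar.biUnion id) ∩ (U ∩ T) := by
        intro y hy
        rcases Finset.mem_insert.mp hy with rfl | hy
        · exact hx'
        · exact Finset.mem_inter.mpr
            ⟨Finset.mem_union_right _ (Finset.mem_inter.mp hy).1,
             (Finset.mem_inter.mp hy).2⟩
      calc (Sstar.biUnion id ∩ (U ∩ T)).card + 1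
          = (insert x (Sstar.biUnion id ∩ (U ∩ T))).card :=
            (Finset.card_insert_of_notMem
              (fun h => hxW (Finset.mem_inter.mp h).1)).symm
        _ ≤ _ := Finset.card_le_card hsub
    have hred : ((E ∪ Sstar.biUnion id) ∩ (U \ T)).card
        ≤ (Sstar.biUnion id ∩ (U \ T)).card + 1 := by
      have hdist : (E ∪ Sstar.biUnion id) ∩ (U \ T)
          = (E ∩ (U \ T)) ∪ (Sstar.biUnion id ∩ (U \ T)) :=
        Finset.union_inter_distrib_right _ _ _
      rw [hdist]
      calc ((E ∩ (U \ T)) ∪ (Sstar.biUnion id ∩ (U \ T))).card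
          ≤ (E ∩ (U \ T)).card + (Sstar.biUnion id ∩ (U \ T)).card :=
            Finset.card_union_le _ _
        _ = (Sstar.biUnion id ∩ (U \ T)).card + 1 := by
            rw [honered E hES]; omega
    push_cast
    omega
  have hS''O : S'' ∈ O :=
    Finset.mem_filter.mpr ⟨hS''P, fun S''' h => le_trans (hopt S''' h) hge⟩
  have hcard := hSstarmax S'' hS''O
  have hlt : Sstar.biUnion id ⊂ S''.biUnion id := by
    rw [hunion]
    exact ⟨Finset.subset_union_right,
      fun h => hxW (h (Finset.mem_union_left _ hxE))⟩
  exact absurd hcard (not_le.mpr (Finset.card_lt_card hlt))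
end

section
/- In a one-red instance in which every feature belongs to at least one exemplar, the maximum margin over all subcollections of S equals |B| − min{ |(⋃_{E∈S'} E) ∩ R| : S' ⊆ S and B ⊆ ⋃_{E∈S'} E }, i.e., the optimal margin equals the number of blue features minus the minimum number of red features in a subcollection covering all blue features. -/
lemma biUnion_union_aux {α β : Type*} [DecidableEq α] [DecidableEq β]
    (s t : Finset α) (f : α → Finset β) :
    (s ∪ t).biUnion f = s.biUnion f ∪ t.biUnion f := by
  ext x
  simp only [Finset.mem_biUnion, Finset.mem_union]
  constructor
  · rintro ⟨a, (ha | ha), hx⟩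
    · exact Or.inl ⟨a, ha, hx⟩
    · exact Or.inr ⟨a, ha, hx⟩
  · rintro (⟨a, ha, hx⟩ | ⟨a, ha, hx⟩)
    · exact ⟨a, Or.inl ha, hx⟩
    · exact ⟨a, Or.inr ha, hx⟩

theorem stmt_4 {α : Type*} [DecidableEq α] (U T : Finset α) (hTU : T ⊆ U)
    (S : Finset (Finset α)) (hS : ∀ E ∈ S, E.Nonempty ∧ E ⊆ U)
    (honered : ∀ E ∈ S, (E ∩ (U \ T)).card = 1)
    (hocc : ∀ x ∈ U, ∃ E ∈ S, x ∈ E) :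
    ∃ r : ℤ,
      IsLeast {c : ℤ | ∃ S' ⊆ S, (U ∩ T) ⊆ S'.biUnion id ∧
          (((S'.biUnion id) ∩ (U \ T)).card : ℤ) = c} r ∧
      IsGreatest {mg : ℤ | ∃ S' ⊆ S, tapMargin U T S' = mg} (((U ∩ T).card : ℤ) - r) := by
  classical
  set B := U ∩ T with hB
  set R := U \ T with hR
  set F : Finset (Finset (Finset α)) :=
    S.powerset.filter (fun S' => B ⊆ S'.biUnion id) with hF
  have hSF : S ∈ F := by
    simp only [hF, Finset.mem_filter, Finset.mem_powerset]
    refine ⟨le_refl _, fun x hx => ?_⟩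
    obtain ⟨E, hE, hxE⟩ := hocc x (Finset.mem_inter.mp hx).1
    exact Finset.mem_biUnion.mpr ⟨E, hE, hxE⟩
  obtain ⟨S₀, hS₀F, hmin⟩ :=
    F.exists_min_image (fun S' => ((S'.biUnion id) ∩ R).card) ⟨S, hSF⟩
  have hS₀F' : S₀ ⊆ S ∧ B ⊆ S₀.biUnion id := by
    simpa only [hF, Finset.mem_filter, Finset.mem_powerset] using hS₀F
  refine ⟨(((S₀.biUnion id) ∩ R).card : ℤ), ⟨⟨S₀, hS₀F'.1, hS₀F'.2, rfl⟩, ?_⟩,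
    ⟨⟨S₀, hS₀F'.1, ?_⟩, ?_⟩⟩
  · rintro c ⟨S', hS'sub, hcov, rfl⟩
    have hmem : S' ∈ F := by
      simp only [hF, Finset.mem_filter, Finset.mem_powerset]
      exact ⟨hS'sub, hcov⟩
    exact_mod_cast hmin S' hmem
  · have h0 : (S₀.biUnion id) ∩ B = B := Finset.inter_eq_right.mpr hS₀F'.2
    simp only [tapMargin, ← hB, ← hR, h0]
  · rintro mg ⟨S', hS'sub, rfl⟩
    set u' := S'.biUnion id with hu'
    set M := B \ u' with hMdef
    have hMex : ∀ b ∈ M, ∃ E ∈ S, b ∈ E := fun b hb =>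
      hocc b (Finset.mem_inter.mp (Finset.mem_sdiff.mp hb).1).1
    choose g hgS hgb using hMex
    set S'' := S' ∪ M.attach.image (fun b => g b.1 b.2) with hS''
    -- coverage
    have hbiu : S''.biUnion id = u' ∪ ((M.attach.image (fun b => g b.1 b.2)).biUnion id) :=
      biUnion_union_aux _ _ _
    have hcov : B ⊆ S''.biUnion id := by
      intro b hb
      rw [hbiu]
      by_cases hbu : b ∈ u'
      · exact Finset.mem_union_left _ hbu
      · have hbM : b ∈ M := Finset.mem_sdiff.mpr ⟨hb, hbu⟩
        refine Finset.mem_union_right _ (Finset.mem_biUnion.mpr ?_)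
        exact ⟨g b hbM, Finset.mem_image.mpr ⟨⟨b, hbM⟩, Finset.mem_attach _ _, rfl⟩,
          hgb b hbM⟩
    have hS''sub : S'' ⊆ S := by
      rw [hS'']
      apply Finset.union_subset hS'sub
      intro E hE
      obtain ⟨b, _, rfl⟩ := Finset.mem_image.mp hE
      exact hgS b.1 b.2
    -- red count of the added part
    have hred2 : (((M.attach.image (fun b => g b.1 b.2)).biUnion id) ∩ R).card ≤ M.card := by
      have h1 : ((M.attach.image (fun b => g b.1 b.2)).biUnion id) ∩ R
          = (M.attach.image (fun b => g b.1 b.2)).biUnion (fun E => E ∩ R) := by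
        ext x
        simp [Finset.mem_biUnion, Finset.mem_inter]
      rw [h1]
      calc ((M.attach.image (fun b => g b.1 b.2)).biUnion (fun E => E ∩ R)).card
          ≤ ∑ E ∈ M.attach.image (fun b => g b.1 b.2), (E ∩ R).card :=
            Finset.card_biUnion_le
        _ = ∑ E ∈ M.attach.image (fun b => g b.1 b.2), 1 := by
            apply Finset.sum_congr rfl
            intro E hE
            obtain ⟨b, _, rfl⟩ := Finset.mem_image.mp hE
            exact honered _ (hgS b.1 b.2)
        _ = (M.attach.image (fun b => g b.1 b.2)).card := by simp
        _ ≤ M.attach.card := Finset.card_image_le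
        _ = M.card := Finset.card_attach
    have hredS'' : ((S''.biUnion id) ∩ R).card ≤ (u' ∩ R).card + M.card := by
      rw [hbiu, Finset.union_inter_distrib_right]
      calc ((u' ∩ R) ∪ (((M.attach.image (fun b => g b.1 b.2)).biUnion id) ∩ R)).card
          ≤ (u' ∩ R).card + (((M.attach.image (fun b => g b.1 b.2)).biUnion id) ∩ R).card :=
            Finset.card_union_le _ _
        _ ≤ (u' ∩ R).card + M.card := by omega
    -- minimality
    have hmin' : ((S₀.biUnion id) ∩ R).card ≤ ((S''.biUnion id) ∩ R).card := by
      apply hmin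
      simp only [hF, Finset.mem_filter, Finset.mem_powerset]
      exact ⟨hS''sub, hcov⟩
    -- blue count of S'
    have hblue : (u' ∩ B).card + M.card = B.card := by
      have h1 : u' ∩ B = B \ M := by
        rw [hMdef, Finset.sdiff_sdiff_self_left, Finset.inter_comm]
      rw [h1]
      exact Finset.card_sdiff_add_card_eq_card Finset.sdiff_subset
    have key : ((S₀.biUnion id) ∩ R).card ≤ (u' ∩ R).card + M.card := le_trans hmin' hredS''
    show tapMargin U T S' ≤ (B.card : ℤ) - ((S₀.biUnion id) ∩ R).card
    unfold tapMargin
    rw [← hB, ← hR, ← hu']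
    push_cast
    omega
end

section
/- For the TAP instance constructed from a Set Cover instance (𝒰, 𝒞) with ⋃𝒞 = 𝒰, the maximum margin over all subcollections of exemplars equals |𝒰| − min{ |I| : I ⊆ {1, …, t} and ⋃_{i∈I} S_i = 𝒰 }, i.e., the size of the ground set minus the minimum size of a subcover. -/
/-- Ground set of the TAP instance constructed from a Set Cover instance:
the elements of `𝒰` (blue) together with one fresh red feature per set. -/
def scU {β : Type*} [DecidableEq β] (𝒰 : Finset β) (t : ℕ) : Finset (β ⊕ Fin t) :=
  (𝒰.image Sum.inl) ∪ ((Finset.univ : Finset (Fin t)).image Sum.inr)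

/-- Target of the constructed TAP instance: the elements of `𝒰` are blue. -/
def scT {β : Type*} [DecidableEq β] (𝒰 : Finset β) (t : ℕ) : Finset (β ⊕ Fin t) :=
  𝒰.image Sum.inl

/-- Exemplars of the constructed TAP instance: the sets `{r_i, j}` for each
`i` and each `j ∈ S_i`. -/
def scCollection {β : Type*} [DecidableEq β] (t : ℕ) (Sc : Fin t → Finset β) :
    Finset (Finset (β ⊕ Fin t)) :=
  (Finset.univ : Finset (Fin t)).biUnion
    (fun i => (Sc i).image (fun j => ({Sum.inr i, Sum.inl j} : Finset (β ⊕ Fin t))))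

lemma margin_formula {β : Type*} [DecidableEq β] (𝒰 : Finset β) (t : ℕ)
    (S' : Finset (Finset (β ⊕ Fin t))) :
    tapMargin (scU 𝒰 t) (scT 𝒰 t) S' =
      ((𝒰.filter fun j => Sum.inl j ∈ S'.biUnion id).card : ℤ) -
      (((Finset.univ : Finset (Fin t)).filter fun i => Sum.inr i ∈ S'.biUnion id).card : ℤ) := by
  have h1 : scU 𝒰 t ∩ scT 𝒰 t = 𝒰.image Sum.inl := by
    apply Finset.inter_eq_right.mpr
    exact Finset.subset_union_left
  have h2 : scU 𝒰 t \ scT 𝒰 t = (Finset.univ : Finset (Fin t)).image Sum.inr := by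
    ext x
    cases x <;> simp [scU, scT]
  have h3 : S'.biUnion id ∩ 𝒰.image Sum.inl =
      (𝒰.filter fun j => Sum.inl j ∈ S'.biUnion id).image Sum.inl := by
    ext x
    cases x <;> simp [and_comm]
  have h4 : S'.biUnion id ∩ (Finset.univ : Finset (Fin t)).image Sum.inr =
      ((Finset.univ : Finset (Fin t)).filter fun i => Sum.inr i ∈ S'.biUnion id).image Sum.inr := by
    ext x
    cases x <;> simp [and_comm]
  rw [tapMargin, h1, h2, h3, h4,
    Finset.card_image_of_injective _ Sum.inl_injective,
    Finset.card_image_of_injective _ Sum.inr_injective]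

theorem stmt_5 {β : Type*} [DecidableEq β] (𝒰 : Finset β) (t : ℕ) (Sc : Fin t → Finset β)
    (hsub : ∀ i, Sc i ⊆ 𝒰) (hcov : ∀ x ∈ 𝒰, ∃ i, x ∈ Sc i) :
    ∃ c : ℕ,
      IsLeast {k : ℕ | ∃ I : Finset (Fin t), (∀ x ∈ 𝒰, ∃ i ∈ I, x ∈ Sc i) ∧ I.card = k} c ∧
      IsGreatest {mg : ℤ | ∃ S' ⊆ scCollection t Sc, tapMargin (scU 𝒰 t) (scT 𝒰 t) S' = mg}
        ((𝒰.card : ℤ) - c) := by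
  classical
  set K : Set ℕ := {k : ℕ | ∃ I : Finset (Fin t), (∀ x ∈ 𝒰, ∃ i ∈ I, x ∈ Sc i) ∧ I.card = k}
    with hKdef
  have hKne : K.Nonempty := by
    refine ⟨(Finset.univ : Finset (Fin t)).card, Finset.univ, fun x hx => ?_, rfl⟩
    obtain ⟨i, hi⟩ := hcov x hx
    exact ⟨i, Finset.mem_univ i, hi⟩
  set c := sInf K with hc
  have hcK : c ∈ K := Nat.sInf_mem hKne
  -- key bound: for any index set I, c + |⋃ I| ≤ |I| + |𝒰|
  have hkey : ∀ I : Finset (Fin t), c + (I.biUnion Sc).card ≤ I.card + 𝒰.card := by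
    intro I
    set D := 𝒰 \ I.biUnion Sc with hD
    have hUsub : I.biUnion Sc ⊆ 𝒰 := Finset.biUnion_subset.mpr fun i _ => hsub i
    have f : ∀ x ∈ D, Fin t := fun x hx => (hcov x (Finset.mem_sdiff.mp hx).1).choose
    set J := I ∪ D.attach.image (fun x => (hcov x.1 (Finset.mem_sdiff.mp x.2).1).choose) with hJ
    have hJcov : ∀ x ∈ 𝒰, ∃ i ∈ J, x ∈ Sc i := by
      intro x hx
      by_cases hxb : x ∈ I.biUnion Sc
      · obtain ⟨i, hiI, hxi⟩ := Finset.mem_biUnion.mp hxb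
        exact ⟨i, Finset.mem_union_left _ hiI, hxi⟩
      · have hxD : x ∈ D := Finset.mem_sdiff.mpr ⟨hx, hxb⟩
        refine ⟨(hcov x hx).choose, ?_, ?_⟩
        · apply Finset.mem_union_right
          refine Finset.mem_image.mpr ⟨⟨x, hxD⟩, Finset.mem_attach _ _, rfl⟩
        · exact (hcov x hx).choose_spec
    have hcJ : c ≤ J.card := Nat.sInf_le ⟨J, hJcov, rfl⟩
    have hJle : J.card ≤ I.card + D.card := by
      calc J.card ≤ I.card + (D.attach.image _).card := Finset.card_union_le _ _
        _ ≤ I.card + D.attach.card := by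
            exact Nat.add_le_add_left (Finset.card_image_le) _
        _ = I.card + D.card := by rw [Finset.card_attach]
    have hDcard : D.card + (I.biUnion Sc).card = 𝒰.card :=
      Finset.card_sdiff_add_card_eq_card hUsub
    omega
  refine ⟨c, ⟨hcK, fun k hk => Nat.sInf_le hk⟩, ?_, ?_⟩
  · -- membership: construct S' achieving 𝒰.card - c
    obtain ⟨I₀, hI₀cov, hI₀card⟩ := hcK
    have hne : ∀ i ∈ I₀, (Sc i).Nonempty := by
      intro i hi
      by_contra hempty
      rw [Finset.not_nonempty_iff_eq_empty] at hempty
      have hcov' : ∀ x ∈ 𝒰, ∃ i' ∈ I₀.erase i, x ∈ Sc i' := by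
        intro x hx
        obtain ⟨i', hi', hxi'⟩ := hI₀cov x hx
        refine ⟨i', Finset.mem_erase.mpr ⟨?_, hi'⟩, hxi'⟩
        rintro rfl
        simp [hempty] at hxi'
      have h1 : c ≤ (I₀.erase i).card := Nat.sInf_le ⟨_, hcov', rfl⟩
      have h2 : (I₀.erase i).card = I₀.card - 1 := Finset.card_erase_of_mem hi
      have h3 : 0 < I₀.card := Finset.card_pos.mpr ⟨i, hi⟩
      omega
    set S' := I₀.biUnion (fun i => (Sc i).image
      (fun j => ({Sum.inr i, Sum.inl j} : Finset (β ⊕ Fin t)))) with hS'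
    have hsub' : S' ⊆ scCollection t Sc := by
      intro E hE
      rw [hS', Finset.mem_biUnion] at hE
      obtain ⟨i, _, hEi⟩ := hE
      exact Finset.mem_biUnion.mpr ⟨i, Finset.mem_univ i, hEi⟩
    refine ⟨S', hsub', ?_⟩
    rw [margin_formula]
    have hinl : ∀ j : β, (Sum.inl j ∈ S'.biUnion id) ↔ ∃ i ∈ I₀, j ∈ Sc i := by
      intro j
      simp only [hS', Finset.mem_biUnion, id, Finset.mem_image]
      constructor
      · rintro ⟨E, ⟨i, hi, j', hj', rfl⟩, hmem⟩
        simp only [Finset.mem_insert, Finset.mem_singleton] at hmem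
        rcases hmem with h | h
        · exact absurd h (by simp)
        · obtain rfl : j = j' := by simpa using h
          exact ⟨i, hi, hj'⟩
      · rintro ⟨i, hi, hj⟩
        exact ⟨{Sum.inr i, Sum.inl j}, ⟨i, hi, j, hj, rfl⟩, by simp⟩
    have hinr : ∀ i : Fin t, (Sum.inr i ∈ S'.biUnion id) ↔ i ∈ I₀ := by
      intro i
      simp only [hS', Finset.mem_biUnion, id, Finset.mem_image]
      constructor
      · rintro ⟨E, ⟨i', hi', j', hj', rfl⟩, hmem⟩
        simp only [Finset.mem_insert, Finset.mem_singleton] at hmem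
        rcases hmem with h | h
        · obtain rfl : i = i' := by simpa using h
          exact hi'
        · exact absurd h (by simp)
      · intro hi
        obtain ⟨j, hj⟩ := hne i hi
        exact ⟨{Sum.inr i, Sum.inl j}, ⟨i, hi, j, hj, rfl⟩, by simp⟩
    have hfilt1 : (𝒰.filter fun j => Sum.inl j ∈ S'.biUnion id) = 𝒰 := by
      apply Finset.filter_true_of_mem
      intro j hj
      rw [hinl]
      exact hI₀cov j hj
    have hfilt2 : ((Finset.univ : Finset (Fin t)).filter fun i => Sum.inr i ∈ S'.biUnion id)
        = I₀ := by
      ext i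
      rw [Finset.mem_filter]
      simp only [Finset.mem_univ, true_and]
      exact hinr i
    rw [hfilt1, hfilt2, hI₀card]
  · -- upper bound
    rintro mg ⟨S', hS'sub, rfl⟩
    rw [margin_formula]
    set W := S'.biUnion id with hW
    set I := (Finset.univ : Finset (Fin t)).filter (fun i => Sum.inr i ∈ W) with hI
    set C := 𝒰.filter (fun j => Sum.inl j ∈ W) with hCdef
    have hCI : C ⊆ I.biUnion Sc := by
      intro j hj
      rw [hCdef, Finset.mem_filter] at hj
      obtain ⟨hj𝒰, hjW⟩ := hj
      obtain ⟨E, hE, hjE⟩ := Finset.mem_biUnion.mp hjW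
      have hEc := hS'sub hE
      rw [scCollection, Finset.mem_biUnion] at hEc
      obtain ⟨i, _, hEi⟩ := hEc
      obtain ⟨j', hj', rfl⟩ := Finset.mem_image.mp hEi
      simp only [id] at hjE
      have hjj' : j = j' := by
        simp only [Finset.mem_insert, Finset.mem_singleton] at hjE
        rcases hjE with h | h
        · exact absurd h (by simp)
        · simpa using h
      subst hjj'
      have hiI : i ∈ I := by
        rw [hI, Finset.mem_filter]
        refine ⟨Finset.mem_univ i, Finset.mem_biUnion.mpr ⟨_, hE, ?_⟩⟩
        simp only [id]
        exact Finset.mem_insert_self _ _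
      exact Finset.mem_biUnion.mpr ⟨i, hiI, hj'⟩
    have h1 : C.card ≤ (I.biUnion Sc).card := Finset.card_le_card hCI
    have h2 := hkey I
    omega
end

section
/- In the TAP instance constructed from a CNF formula φ with n variables and m clauses: (i) for every truth assignment ρ of the variables, the margin of the subcollection {X_{i,ρ(x_i)} : 1 ≤ i ≤ n} equals n plus the number of clauses of φ satisfied by ρ; and (ii) the maximum margin over all subcollections of exemplars equals n plus the maximum, over all truth assignments ρ, of the number of clauses of φ satisfied by ρ. -/
set_option synthInstance.maxSize 400

/-- Features of the TAP instance constructed from a CNF formula with `n` variables and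
`m` clauses, with `P` penalty features per exemplar and `Q` reward features per variable:
clause features, penalty features, and reward features. -/
abbrev CnfFeat (n m P Q : ℕ) : Type :=
  Fin m ⊕ ((Fin n × Bool) × Fin P) ⊕ (Fin n × Fin Q)

/-- The exemplar `X_{i,b}`: the clause features of the clauses containing the literal
`(i, b)`, the `P` penalty features private to `X_{i,b}`, and the `Q` reward features
of variable `i`. -/
def cnfEx (n m P Q : ℕ) (c : Fin m → Finset (Fin n × Bool)) (i : Fin n) (b : Bool) :
    Finset (CnfFeat n m P Q) :=
  ((Finset.univ.filter (fun j => (i, b) ∈ c j)).image Sum.inl) ∪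
  ((Finset.univ : Finset (Fin P)).image (fun p => Sum.inr (Sum.inl ((i, b), p)))) ∪
  ((Finset.univ : Finset (Fin Q)).image (fun q => Sum.inr (Sum.inr (i, q))))

/-- The blue features (the target): clause features and reward features. -/
def cnfBlue (n m P Q : ℕ) : Finset (CnfFeat n m P Q) :=
  ((Finset.univ : Finset (Fin m)).image Sum.inl) ∪
  ((Finset.univ : Finset (Fin n × Fin Q)).image (fun q => Sum.inr (Sum.inr q)))

/-- The collection of the `2n` exemplars `X_{i,b}`. -/
def cnfCollection (n m P Q : ℕ) (c : Fin m → Finset (Fin n × Bool)) :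
    Finset (Finset (CnfFeat n m P Q)) :=
  (Finset.univ : Finset (Fin n × Bool)).image (fun p => cnfEx n m P Q c p.1 p.2)

/-- The number of clauses of `c` satisfied by the truth assignment `ρ`. -/
def satCount (n m : ℕ) (c : Fin m → Finset (Fin n × Bool)) (ρ : Fin n → Bool) : ℕ :=
  (Finset.univ.filter (fun j => ∃ l ∈ c j, ρ l.1 = l.2)).card

lemma margin_image (n m P Q : ℕ) (c : Fin m → Finset (Fin n × Bool))
    (A : Finset (Fin n × Bool)) :
    tapMargin (Finset.univ) (cnfBlue n m P Q)
        (A.image (fun p => cnfEx n m P Q c p.1 p.2))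
      = ((Finset.univ.filter (fun j => ∃ p ∈ A, p ∈ c j)).card : ℤ)
        + Q * (A.image Prod.fst).card - P * A.card := by
  classical
  have hWmem : ∀ x, x ∈ (A.image (fun p => cnfEx n m P Q c p.1 p.2)).biUnion id ↔
      ∃ p ∈ A, x ∈ cnfEx n m P Q c p.1 p.2 := by
    intro x
    simp only [Finset.mem_biUnion, Finset.mem_image, id]
    constructor
    · rintro ⟨E, ⟨p, hp, rfl⟩, hx⟩; exact ⟨p, hp, hx⟩
    · rintro ⟨p, hp, hx⟩; exact ⟨_, ⟨p, hp, rfl⟩, hx⟩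
  have hblue : (A.image (fun p => cnfEx n m P Q c p.1 p.2)).biUnion id
        ∩ (Finset.univ ∩ cnfBlue n m P Q) =
      ((Finset.univ.filter (fun j => ∃ p ∈ A, p ∈ c j)).image Sum.inl) ∪
      (((A.image Prod.fst) ×ˢ (Finset.univ : Finset (Fin Q))).image
        (fun iq => Sum.inr (Sum.inr iq))) := by
    ext x
    rw [Finset.mem_inter, hWmem]
    rcases x with j | ⟨⟨i, b⟩, p⟩ | ⟨i, q⟩ <;>
      simp [cnfEx, cnfBlue, Prod.ext_iff]
  have hred : (A.image (fun p => cnfEx n m P Q c p.1 p.2)).biUnion id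
        ∩ (Finset.univ \ cnfBlue n m P Q) =
      ((A ×ˢ (Finset.univ : Finset (Fin P))).image
        (fun x => Sum.inr (Sum.inl x))) := by
    ext x
    rw [Finset.mem_inter, hWmem]
    rcases x with j | ⟨⟨i, b⟩, p⟩ | ⟨i, q⟩ <;>
      simp [cnfEx, cnfBlue, Prod.ext_iff]
  unfold tapMargin
  rw [hblue, hred, Finset.card_union_of_disjoint, Finset.card_image_of_injective _
    Sum.inl_injective, Finset.card_image_of_injective, Finset.card_image_of_injective,
    Finset.card_product, Finset.card_product, Finset.card_univ, Finset.card_univ,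
    Fintype.card_fin, Fintype.card_fin]
  · push_cast; ring
  · intro a b hab; simpa using hab
  · intro a b hab; simpa using hab
  · rw [Finset.disjoint_left]; rintro x hx hy
    simp only [Finset.mem_image] at hx hy
    obtain ⟨j, _, rfl⟩ := hx
    obtain ⟨iq, _, h⟩ := hy
    exact absurd h (by simp)

lemma margin_assignment (n m : ℕ) (c : Fin m → Finset (Fin n × Bool)) (ρ : Fin n → Bool) :
    tapMargin (Finset.univ) (cnfBlue n m (m + 1) (m + 2))
        ((Finset.univ : Finset (Fin n)).image (fun i => cnfEx n m (m + 1) (m + 2) c i (ρ i)))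
      = (n : ℤ) + satCount n m c ρ := by
  classical
  have himg : (Finset.univ : Finset (Fin n)).image (fun i => cnfEx n m (m + 1) (m + 2) c i (ρ i))
      = ((Finset.univ : Finset (Fin n)).image (fun i => (i, ρ i))).image
          (fun p => cnfEx n m (m + 1) (m + 2) c p.1 p.2) := by
    rw [Finset.image_image]; rfl
  rw [himg, margin_image]
  set A := (Finset.univ : Finset (Fin n)).image (fun i => (i, ρ i)) with hA
  have hinj : Function.Injective (fun i : Fin n => (i, ρ i)) := by
    intro a b hab; exact congrArg Prod.fst hab
  have hcardA : A.card = n := by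
    rw [hA, Finset.card_image_of_injective _ hinj, Finset.card_univ, Fintype.card_fin]
  have hvars : A.image Prod.fst = Finset.univ := by
    apply Finset.eq_univ_of_forall
    intro i
    simp only [hA, Finset.image_image, Finset.mem_image]
    exact ⟨i, Finset.mem_univ i, rfl⟩
  have hcov : Finset.univ.filter (fun j => ∃ p ∈ A, p ∈ c j)
      = Finset.univ.filter (fun j => ∃ l ∈ c j, ρ l.1 = l.2) := by
    apply Finset.filter_congr
    intro j _
    simp only [hA, Finset.mem_image, Finset.mem_univ, true_and]
    constructor
    · rintro ⟨p, ⟨i, rfl⟩, hpc⟩; exact ⟨(i, ρ i), hpc, rfl⟩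
    · rintro ⟨l, hl, hρ⟩
      refine ⟨l, ⟨l.1, ?_⟩, hl⟩
      rw [hρ]
  rw [hcov, hvars, hcardA, Finset.card_univ, Fintype.card_fin]
  unfold satCount
  push_cast
  ring

theorem stmt_8 (n m : ℕ) (c : Fin m → Finset (Fin n × Bool)) (hc : ∀ j, (c j).Nonempty) :
    (∀ ρ : Fin n → Bool,
      tapMargin (Finset.univ) (cnfBlue n m (m + 1) (m + 2))
          ((Finset.univ : Finset (Fin n)).image (fun i => cnfEx n m (m + 1) (m + 2) c i (ρ i)))
        = (n : ℤ) + satCount n m c ρ) ∧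
    ∃ s : ℕ,
      IsGreatest {k : ℕ | ∃ ρ : Fin n → Bool, satCount n m c ρ = k} s ∧
      IsGreatest {mg : ℤ | ∃ S' ⊆ cnfCollection n m (m + 1) (m + 2) c,
          tapMargin (Finset.univ) (cnfBlue n m (m + 1) (m + 2)) S' = mg}
        ((n : ℤ) + s) := by
  classical
  refine ⟨fun ρ => margin_assignment n m c ρ, ?_⟩
  -- the maximum number of satisfied clauses
  set F : Finset ℕ := (Finset.univ : Finset (Fin n → Bool)).image (satCount n m c) with hF
  have hFne : F.Nonempty := ⟨satCount n m c (fun _ => true),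
    Finset.mem_image.2 ⟨fun _ => true, Finset.mem_univ _, rfl⟩⟩
  set s := F.max' hFne with hs
  obtain ⟨ρ₀, -, hρ₀⟩ := Finset.mem_image.1 (F.max'_mem hFne)
  have hub : ∀ ρ : Fin n → Bool, satCount n m c ρ ≤ s := fun ρ =>
    F.le_max' _ (Finset.mem_image.2 ⟨ρ, Finset.mem_univ _, rfl⟩)
  refine ⟨s, ⟨⟨ρ₀, hρ₀⟩, fun k ⟨ρ, hρ⟩ => hρ ▸ hub ρ⟩, ?_, ?_⟩
  · -- n + s is attained
    refine ⟨(Finset.univ : Finset (Fin n)).image (fun i => cnfEx n m (m + 1) (m + 2) c i (ρ₀ i)),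
      ?_, by rw [margin_assignment, hρ₀]⟩
    intro E hE
    obtain ⟨i, -, rfl⟩ := Finset.mem_image.1 hE
    exact Finset.mem_image.2 ⟨(i, ρ₀ i), Finset.mem_univ _, rfl⟩
  · -- n + s is an upper bound
    rintro mg ⟨S', hsub, rfl⟩
    set A : Finset (Fin n × Bool) :=
      Finset.univ.filter (fun p => cnfEx n m (m + 1) (m + 2) c p.1 p.2 ∈ S') with hA
    have hS' : S' = A.image (fun p => cnfEx n m (m + 1) (m + 2) c p.1 p.2) := by
      ext E
      constructor
      · intro hE
        obtain ⟨p, -, rfl⟩ := Finset.mem_image.1 (hsub hE)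
        exact Finset.mem_image.2 ⟨p, Finset.mem_filter.2 ⟨Finset.mem_univ _, hE⟩, rfl⟩
      · intro hE
        obtain ⟨p, hp, rfl⟩ := Finset.mem_image.1 hE
        exact (Finset.mem_filter.1 hp).2
    rw [hS', margin_image]
    set cov := (Finset.univ.filter (fun j => ∃ p ∈ A, p ∈ c j)).card with hcov
    have hcovm : cov ≤ m := le_trans (Finset.card_filter_le _ _)
      (by rw [Finset.card_univ, Fintype.card_fin])
    have hvn : (A.image Prod.fst).card ≤ n := le_trans (Finset.card_le_univ _) (by simp)
    have hva : (A.image Prod.fst).card ≤ A.card := Finset.card_image_le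
    rcases eq_or_lt_of_le hva with heq | hlt
    · -- no variable repeated: read off an assignment
      have hinjOn : Set.InjOn Prod.fst (A : Set (Fin n × Bool)) :=
        Finset.injOn_of_card_image_eq heq
      set ρ : Fin n → Bool := fun i => decide ((i, true) ∈ A) with hρ
      have hcovsat : cov ≤ satCount n m c ρ := by
        apply Finset.card_le_card
        apply Finset.monotone_filter_right
        rintro j - ⟨⟨i, b⟩, hpA, hpc⟩
        cases b with
        | true => exact ⟨(i, true), hpc, by simp [hρ, hpA]⟩
        | false =>
          refine ⟨(i, false), hpc, ?_⟩
          simp only [hρ, decide_eq_false_iff_not]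
          intro htrue
          have := hinjOn htrue hpA rfl
          simp at this
      have h1 : cov ≤ s := le_trans hcovsat (hub ρ)
      have h2 : ((A.image Prod.fst).card : ℤ) ≤ n := by exact_mod_cast hvn
      have h3 : (cov : ℤ) ≤ s := by exact_mod_cast h1
      have heq' : ((A.image Prod.fst).card : ℤ) = A.card := by exact_mod_cast heq
      rw [heq'] at h2 ⊢
      push_cast
      linarith [h2, h3]
    · -- some variable repeated: heavy penalty
      have h1 : ((A.image Prod.fst).card : ℤ) + 1 ≤ A.card := by exact_mod_cast hlt
      have h2 : (cov : ℤ) ≤ m := by exact_mod_cast hcovm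
      have h3 : ((A.image Prod.fst).card : ℤ) ≤ n := by exact_mod_cast hvn
      have h4 : (0 : ℤ) ≤ s := Int.natCast_nonneg s
      have h5 : ((m : ℤ) + 1) * (((A.image Prod.fst).card : ℤ) + 1) ≤ ((m : ℤ) + 1) * A.card :=
        mul_le_mul_of_nonneg_left h1 (by positivity)
      push_cast
      nlinarith [h1, h2, h3, h4, h5]
end

section
/- Let G = (V, E) be a finite simple graph with no isolated vertices, and consider the TAP instance whose blue features are the edges of G, whose red features are the vertices of G, and whose exemplars are the two-element sets {v, e} for every vertex v ∈ V and every edge e ∈ E incident to v. Then the maximum margin over all subcollections of exemplars equals |E| − τ(G), where τ(G) denotes the minimum size of a vertex cover of G. -/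
set_option synthInstance.maxSize 400

/-- Ground set of the TAP instance built from a graph `G`: all vertices (red)
and all edges (blue). -/
def vcU {V : Type*} [Fintype V] [DecidableEq V] (G : SimpleGraph V) [DecidableRel G.Adj] :
    Finset (V ⊕ Sym2 V) :=
  ((Finset.univ : Finset V).image Sum.inl) ∪ (G.edgeFinset.image Sum.inr)

/-- Target of the TAP instance built from `G`: the edges are the blue features. -/
def vcT {V : Type*} [Fintype V] [DecidableEq V] (G : SimpleGraph V) [DecidableRel G.Adj] :
    Finset (V ⊕ Sym2 V) :=
  G.edgeFinset.image Sum.inr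

/-- Exemplars of the TAP instance built from `G`: the sets `{v, e}` for each vertex `v`
and each edge `e` incident to `v`. -/
def vcCollection {V : Type*} [Fintype V] [DecidableEq V] (G : SimpleGraph V)
    [DecidableRel G.Adj] : Finset (Finset (V ⊕ Sym2 V)) :=
  (Finset.univ : Finset V).biUnion
    (fun v => (G.edgeFinset.filter (fun e => v ∈ e)).image
      (fun e => ({Sum.inl v, Sum.inr e} : Finset (V ⊕ Sym2 V))))

section Aux
variable {V : Type*} [Fintype V] [DecidableEq V] (G : SimpleGraph V) [DecidableRel G.Adj]

lemma vcU_inter_vcT : vcU G ∩ vcT G = vcT G :=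
  Finset.inter_eq_right.mpr (fun x hx => Finset.mem_union_right _ hx)

lemma vcU_sdiff_vcT : vcU G \ vcT G = (Finset.univ : Finset V).image Sum.inl := by
  ext x
  cases x with
  | inl v => simp [vcU, vcT]
  | inr e => simp [vcU, vcT]

lemma margin_eq (S' : Finset (Finset (V ⊕ Sym2 V))) :
    tapMargin (vcU G) (vcT G) S' =
      ((G.edgeFinset.filter (fun e => Sum.inr e ∈ S'.biUnion id)).card : ℤ) -
      ((Finset.univ.filter (fun v : V => Sum.inl v ∈ S'.biUnion id)).card : ℤ) := by
  unfold tapMargin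
  rw [vcU_inter_vcT, vcU_sdiff_vcT]
  have h1 : (S'.biUnion id) ∩ vcT G =
      (G.edgeFinset.filter (fun e => Sum.inr e ∈ S'.biUnion id)).image Sum.inr := by
    ext x
    cases x with
    | inl v => simp [vcT]
    | inr e => simp [vcT]; tauto
  have h2 : (S'.biUnion id) ∩ ((Finset.univ : Finset V).image Sum.inl) =
      (Finset.univ.filter (fun v : V => Sum.inl v ∈ S'.biUnion id)).image Sum.inl := by
    ext x
    cases x with
    | inl v => simp
    | inr e => simp
  rw [h1, h2, Finset.card_image_of_injective _ Sum.inr_injective,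
    Finset.card_image_of_injective _ Sum.inl_injective]

lemma mem_vcCollection {P : Finset (V ⊕ Sym2 V)} :
    P ∈ vcCollection G ↔
      ∃ v e, e ∈ G.edgeFinset ∧ v ∈ e ∧ P = {Sum.inl v, Sum.inr e} := by
  simp only [vcCollection, Finset.mem_biUnion, Finset.mem_univ, true_and,
    Finset.mem_image, Finset.mem_filter]
  constructor
  · rintro ⟨v, e, ⟨he, hv⟩, rfl⟩
    exact ⟨v, e, he, hv, rfl⟩
  · rintro ⟨v, e, he, hv, rfl⟩
    exact ⟨v, e, ⟨he, hv⟩, rfl⟩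

lemma covered {S' : Finset (Finset (V ⊕ Sym2 V))} (hS' : S' ⊆ vcCollection G)
    {e : Sym2 V} (he : Sum.inr e ∈ S'.biUnion id) :
    ∃ v, v ∈ e ∧ Sum.inl v ∈ S'.biUnion id := by
  rw [Finset.mem_biUnion] at he
  obtain ⟨P, hP, hx⟩ := he
  obtain ⟨v, e', he', hve', rfl⟩ := (mem_vcCollection G).mp (hS' hP)
  simp only [id] at hx
  have : e = e' := by
    rcases Finset.mem_insert.mp hx with h | h
    · exact absurd h (by simp)
    · exact Sum.inr_injective (Finset.mem_singleton.mp h)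
  subst this
  exact ⟨v, hve', Finset.mem_biUnion.mpr ⟨_, hP, by simp⟩⟩

end Aux

theorem stmt_9 {V : Type*} [Fintype V] [DecidableEq V] (G : SimpleGraph V)
    [DecidableRel G.Adj] (hiso : ∀ v : V, ∃ w, G.Adj v w) :
    ∃ τ : ℕ,
      IsLeast {k : ℕ | ∃ W : Finset V, (∀ e ∈ G.edgeFinset, ∃ v ∈ W, v ∈ e) ∧ W.card = k} τ ∧
      IsGreatest {mg : ℤ | ∃ S' ⊆ vcCollection G, tapMargin (vcU G) (vcT G) S' = mg}
        ((G.edgeFinset.card : ℤ) - τ) := by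
  classical
  set C : Set ℕ :=
    {k : ℕ | ∃ W : Finset V, (∀ e ∈ G.edgeFinset, ∃ v ∈ W, v ∈ e) ∧ W.card = k} with hC
  have hCne : C.Nonempty :=
    ⟨(Finset.univ : Finset V).card, Finset.univ,
      fun e _ => ⟨e.out.1, Finset.mem_univ _, Sym2.out_fst_mem e⟩, rfl⟩
  refine ⟨sInf C, ⟨Nat.sInf_mem hCne, fun k hk => Nat.sInf_le hk⟩, ?_, ?_⟩
  · -- membership: achievable
    obtain ⟨W, hWcov, hWcard⟩ := Nat.sInf_mem hCne
    set S₀ : Finset (Finset (V ⊕ Sym2 V)) :=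
      W.biUnion (fun v => (G.edgeFinset.filter (fun e => v ∈ e)).image
        (fun e => ({Sum.inl v, Sum.inr e} : Finset (V ⊕ Sym2 V)))) with hS₀
    have hsub : S₀ ⊆ vcCollection G := by
      intro P hP
      simp only [hS₀, Finset.mem_biUnion, Finset.mem_image, Finset.mem_filter] at hP
      obtain ⟨v, _, e, ⟨he, hv⟩, rfl⟩ := hP
      exact (mem_vcCollection G).mpr ⟨v, e, he, hv, rfl⟩
    refine ⟨S₀, hsub, ?_⟩
    rw [margin_eq]
    have hF : G.edgeFinset.filter (fun e => Sum.inr e ∈ S₀.biUnion id) = G.edgeFinset := by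
      apply Finset.filter_true_of_mem
      intro e he
      obtain ⟨v, hvW, hve⟩ := hWcov e he
      refine Finset.mem_biUnion.mpr ⟨{Sum.inl v, Sum.inr e}, ?_, by simp⟩
      simp only [hS₀, Finset.mem_biUnion, Finset.mem_image, Finset.mem_filter]
      exact ⟨v, hvW, e, ⟨he, hve⟩, rfl⟩
    have hA : Finset.univ.filter (fun v : V => Sum.inl v ∈ S₀.biUnion id) = W := by
      ext v
      simp only [Finset.mem_filter, Finset.mem_univ, true_and]
      constructor
      · intro hv
        obtain ⟨P, hP, hvP⟩ := Finset.mem_biUnion.mp hv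
        simp only [hS₀, Finset.mem_biUnion, Finset.mem_image, Finset.mem_filter] at hP
        obtain ⟨w, hwW, e, _, rfl⟩ := hP
        simp only [id] at hvP
        rcases Finset.mem_insert.mp hvP with h | h
        · rwa [Sum.inl_injective h]
        · exact absurd (Finset.mem_singleton.mp h) (by simp)
      · intro hvW
        obtain ⟨w, hadj⟩ := hiso v
        have he : s(v, w) ∈ G.edgeFinset := by
          rw [SimpleGraph.mem_edgeFinset, SimpleGraph.mem_edgeSet]; exact hadj
        refine Finset.mem_biUnion.mpr ⟨{Sum.inl v, Sum.inr s(v, w)}, ?_, by simp⟩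
        simp only [hS₀, Finset.mem_biUnion, Finset.mem_image, Finset.mem_filter]
        exact ⟨v, hvW, s(v, w), ⟨he, by simp⟩, rfl⟩
    rw [hF, hA, hWcard]
  · -- upper bound
    rintro mg ⟨S', hS', rfl⟩
    rw [margin_eq]
    set X := S'.biUnion id with hX
    set F := G.edgeFinset.filter (fun e => Sum.inr e ∈ X) with hFdef
    set A := Finset.univ.filter (fun v : V => Sum.inl v ∈ X) with hAdef
    set W' : Finset V := A ∪ (G.edgeFinset \ F).image (fun e => e.out.1) with hW'
    have hcov : ∀ e ∈ G.edgeFinset, ∃ v ∈ W', v ∈ e := by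
      intro e he
      by_cases heF : e ∈ F
      · obtain ⟨v, hve, hvX⟩ := covered G hS' ((Finset.mem_filter.mp heF).2)
        exact ⟨v, Finset.mem_union_left _ (Finset.mem_filter.mpr ⟨Finset.mem_univ _, hvX⟩), hve⟩
      · refine ⟨e.out.1, Finset.mem_union_right _ ?_, Sym2.out_fst_mem e⟩
        exact Finset.mem_image.mpr ⟨e, Finset.mem_sdiff.mpr ⟨he, heF⟩, rfl⟩
    have hτle : sInf C ≤ W'.card := Nat.sInf_le ⟨W', hcov, rfl⟩
    have hcard : W'.card ≤ A.card + (G.edgeFinset.card - F.card) := by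
      calc W'.card ≤ A.card + ((G.edgeFinset \ F).image (fun e => e.out.1)).card :=
            Finset.card_union_le _ _
        _ ≤ A.card + (G.edgeFinset \ F).card := by
            gcongr; exact Finset.card_image_le
        _ = A.card + (G.edgeFinset.card - F.card) := by
            rw [Finset.card_sdiff_of_subset (Finset.filter_subset _ _)]
    have hFle : F.card ≤ G.edgeFinset.card := Finset.card_le_card (Finset.filter_subset _ _)
    have := le_trans hτle hcard
    omega
end

section
/- Let I be a one-red instance with exemplar collection S, and let I' be its collated instance. Then I' is again one-red, for every subcollection of S there is a subcollection of the exemplars of I' with margin at least as large, for every subcollection of the exemplars of I' there is a subcollection of S with the same margin, and consequently the maximum margin of I' equals the maximum margin of I. -/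
/-- The collated collection of exemplars: for each red feature `r` occurring in some
exemplar of `S`, the union of all exemplars of `S` containing `r`. -/
def collated {α : Type*} [DecidableEq α] (U T : Finset α) (S : Finset (Finset α)) :
    Finset (Finset α) :=
  ((U \ T).filter (fun r => ∃ E ∈ S, r ∈ E)).image
    (fun r => (S.filter (fun E => r ∈ E)).biUnion id)

theorem stmt_10 {α : Type*} [DecidableEq α] (U T : Finset α) (hTU : T ⊆ U)
    (S : Finset (Finset α)) (hS : ∀ E ∈ S, E.Nonempty ∧ E ⊆ U)
    (honered : ∀ E ∈ S, (E ∩ (U \ T)).card = 1) :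
    (∀ E' ∈ collated U T S, (E' ∩ (U \ T)).card = 1) ∧
    (∀ A ⊆ S, ∃ A' ⊆ collated U T S, tapMargin U T A ≤ tapMargin U T A') ∧
    (∀ A' ⊆ collated U T S, ∃ A ⊆ S, tapMargin U T A = tapMargin U T A') ∧
    ∃ M : ℤ,
      IsGreatest {mg : ℤ | ∃ A ⊆ S, tapMargin U T A = mg} M ∧
      IsGreatest {mg : ℤ | ∃ A' ⊆ collated U T S, tapMargin U T A' = mg} M := by
  classical
  -- each exemplar's red part is a singleton
  have hred : ∀ E ∈ S, ∀ r ∈ E, r ∈ U \ T → E ∩ (U \ T) = {r} := by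
    intro E hE r hrE hrR
    obtain ⟨a, ha⟩ := Finset.card_eq_one.mp (honered E hE)
    have hmem : r ∈ E ∩ (U \ T) := Finset.mem_inter.mpr ⟨hrE, hrR⟩
    rw [ha] at hmem ⊢
    rw [Finset.mem_singleton] at hmem
    rw [hmem]
  -- margin comparison lemma
  have hmargin_le : ∀ S1 S2 : Finset (Finset α),
      S1.biUnion id ⊆ S2.biUnion id →
      S2.biUnion id ∩ (U \ T) ⊆ S1.biUnion id ∩ (U \ T) →
      tapMargin U T S1 ≤ tapMargin U T S2 := by
    intro S1 S2 h1 h2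
    unfold tapMargin
    have hblue : (S1.biUnion id ∩ (U ∩ T)).card ≤ (S2.biUnion id ∩ (U ∩ T)).card :=
      Finset.card_le_card (Finset.inter_subset_inter h1 (Finset.Subset.refl _))
    have hredeq : (S2.biUnion id ∩ (U \ T)) = (S1.biUnion id ∩ (U \ T)) :=
      Finset.Subset.antisymm h2 (Finset.inter_subset_inter h1 (Finset.Subset.refl _))
    rw [hredeq]
    exact sub_le_sub_right (by exact_mod_cast hblue) _
  have hmargin_eq : ∀ S1 S2 : Finset (Finset α),
      S1.biUnion id = S2.biUnion id → tapMargin U T S1 = tapMargin U T S2 := by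
    intro S1 S2 h
    unfold tapMargin
    rw [h]
  have part1 : ∀ E' ∈ collated U T S, (E' ∩ (U \ T)).card = 1 := by
    intro E' hE'
    rw [collated, Finset.mem_image] at hE'
    obtain ⟨r, hr, rfl⟩ := hE'
    rw [Finset.mem_filter] at hr
    obtain ⟨hrR, E, hES, hrE⟩ := hr
    have hsing : ((S.filter (fun E => r ∈ E)).biUnion id) ∩ (U \ T) = {r} := by
      apply Finset.Subset.antisymm
      · intro x hx
        rw [Finset.mem_inter, Finset.mem_biUnion] at hx
        obtain ⟨⟨F, hF, hxF⟩, hxR⟩ := hx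
        rw [Finset.mem_filter] at hF
        have hFr := hred F hF.1 r hF.2 hrR
        have hxm : x ∈ F ∩ (U \ T) := Finset.mem_inter.mpr ⟨hxF, hxR⟩
        rw [hFr] at hxm
        exact hxm
      · intro x hx
        rw [Finset.mem_singleton] at hx
        subst hx
        rw [Finset.mem_inter, Finset.mem_biUnion]
        exact ⟨⟨E, Finset.mem_filter.mpr ⟨hES, hrE⟩, hrE⟩, hrR⟩
    rw [hsing, Finset.card_singleton]
  have part2 : ∀ A ⊆ S, ∃ A' ⊆ collated U T S, tapMargin U T A ≤ tapMargin U T A' := by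
    intro A hA
    set A' : Finset (Finset α) :=
      ((U \ T).filter (fun r => ∃ E ∈ A, r ∈ E)).image
        (fun r => (S.filter (fun E => r ∈ E)).biUnion id) with hA'def
    refine ⟨A', ?_, ?_⟩
    · rw [collated]
      apply Finset.image_subset_image
      intro r hr
      rw [Finset.mem_filter] at hr ⊢
      obtain ⟨hrR, E, hEA, hrE⟩ := hr
      refine ⟨hrR, ?_⟩
      exact ⟨E, hA hEA, hrE⟩
    · apply hmargin_le
      · intro x hx
        rw [Finset.mem_biUnion] at hx
        obtain ⟨E, hEA, hxE⟩ := hx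
        have hES := hA hEA
        obtain ⟨a, ha⟩ := Finset.card_eq_one.mp (honered E hES)
        have haE : a ∈ E ∩ (U \ T) := ha ▸ Finset.mem_singleton_self a
        rw [Finset.mem_inter] at haE
        rw [Finset.mem_biUnion]
        refine ⟨(S.filter (fun F => a ∈ F)).biUnion id, ?_, ?_⟩
        · rw [hA'def, Finset.mem_image]
          exact ⟨a, Finset.mem_filter.mpr ⟨haE.2, E, hEA, haE.1⟩, rfl⟩
        · rw [id, Finset.mem_biUnion]
          exact ⟨E, Finset.mem_filter.mpr ⟨hES, haE.1⟩, hxE⟩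
      · intro x hx
        rw [Finset.mem_inter, Finset.mem_biUnion] at hx
        obtain ⟨⟨X, hXA', hxX⟩, hxR⟩ := hx
        rw [hA'def, Finset.mem_image] at hXA'
        obtain ⟨r, hr, rfl⟩ := hXA'
        rw [Finset.mem_filter] at hr
        obtain ⟨hrR, E0, hE0A, hrE0⟩ := hr
        rw [id, Finset.mem_biUnion] at hxX
        obtain ⟨F, hF, hxF⟩ := hxX
        rw [Finset.mem_filter] at hF
        have hFr := hred F hF.1 r hF.2 hrR
        have hxm : x ∈ F ∩ (U \ T) := Finset.mem_inter.mpr ⟨hxF, hxR⟩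
        rw [hFr, Finset.mem_singleton] at hxm
        subst hxm
        rw [Finset.mem_inter, Finset.mem_biUnion]
        exact ⟨⟨E0, hE0A, hrE0⟩, hrR⟩
  have part3 : ∀ A' ⊆ collated U T S, ∃ A ⊆ S, tapMargin U T A = tapMargin U T A' := by
    intro A' hA'
    set A : Finset (Finset α) :=
      S.filter (fun E => ∃ r ∈ E ∩ (U \ T),
        (S.filter (fun F => r ∈ F)).biUnion id ∈ A') with hAdef
    refine ⟨A, Finset.filter_subset _ _, ?_⟩
    apply hmargin_eq
    apply Finset.Subset.antisymm
    · intro x hx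
      rw [Finset.mem_biUnion] at hx
      obtain ⟨E, hEA, hxE⟩ := hx
      rw [hAdef, Finset.mem_filter] at hEA
      obtain ⟨hES, r, hrE, hrA'⟩ := hEA
      rw [Finset.mem_inter] at hrE
      rw [Finset.mem_biUnion]
      refine ⟨_, hrA', ?_⟩
      rw [id, Finset.mem_biUnion]
      exact ⟨E, Finset.mem_filter.mpr ⟨hES, hrE.1⟩, hxE⟩
    · intro x hx
      rw [Finset.mem_biUnion] at hx
      obtain ⟨X, hXA', hxX⟩ := hx
      have hXc := hA' hXA'
      rw [collated, Finset.mem_image] at hXc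
      obtain ⟨r, hr, rfl⟩ := hXc
      rw [Finset.mem_filter] at hr
      obtain ⟨hrR, _⟩ := hr
      rw [id, Finset.mem_biUnion] at hxX
      obtain ⟨F, hF, hxF⟩ := hxX
      rw [Finset.mem_filter] at hF
      rw [Finset.mem_biUnion]
      refine ⟨F, ?_, hxF⟩
      rw [hAdef, Finset.mem_filter]
      exact ⟨hF.1, r, Finset.mem_inter.mpr ⟨hF.2, hrR⟩, hXA'⟩
  refine ⟨part1, part2, part3, ?_⟩
  set F : Finset ℤ := S.powerset.image (tapMargin U T) with hFdef
  have hFne : F.Nonempty :=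
    ⟨tapMargin U T ∅, Finset.mem_image.mpr ⟨∅, Finset.empty_mem_powerset S, rfl⟩⟩
  set M := F.max' hFne with hMdef
  have hub : ∀ A ⊆ S, tapMargin U T A ≤ M := fun A hA =>
    Finset.le_max' F _ (Finset.mem_image.mpr ⟨A, Finset.mem_powerset.mpr hA, rfl⟩)
  have hMmem : ∃ A ⊆ S, tapMargin U T A = M := by
    obtain ⟨A, hA, hAM⟩ := Finset.mem_image.mp (Finset.max'_mem F hFne)
    exact ⟨A, Finset.mem_powerset.mp hA, hAM⟩
  refine ⟨M, ⟨hMmem, ?_⟩, ⟨?_, ?_⟩⟩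
  · rintro mg ⟨A, hA, rfl⟩
    exact hub A hA
  · obtain ⟨A, hA, hAM⟩ := hMmem
    obtain ⟨A', hA', hle⟩ := part2 A hA
    obtain ⟨A2, hA2, heq⟩ := part3 A' hA'
    refine ⟨A', hA', le_antisymm (heq ▸ hub A2 hA2) (hAM ▸ hle)⟩
  · rintro mg ⟨A', hA', rfl⟩
    obtain ⟨A, hA, heq⟩ := part3 A' hA'
    exact heq ▸ hub A hA
end

section
/- Let I be a one-red instance in which every exemplar contains at least one blue feature, and let I'' be its shattered instance. Then I'' is a one-red instance in which every exemplar has weight at most 2, and the maximum margin of I'' equals the maximum margin of I. -/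
/-- The shattered collection of exemplars of a one-red instance: for each exemplar
`E ∈ S` and each blue feature `b ∈ E`, the two-element set consisting of `b` and the
unique red feature of `E` (expressed as `insert b (E ∩ (U \ T))`, since `E ∩ (U \ T)`
is the singleton of the red feature of `E`). -/
def shattered {α : Type*} [DecidableEq α] (U T : Finset α) (S : Finset (Finset α)) :
    Finset (Finset α) :=
  S.biUnion (fun E => (E ∩ (U ∩ T)).image (fun b => insert b (E ∩ (U \ T))))

theorem stmt_11 {α : Type*} [DecidableEq α] (U T : Finset α) (hTU : T ⊆ U)
    (S : Finset (Finset α)) (hS : ∀ E ∈ S, E.Nonempty ∧ E ⊆ U)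
    (honered : ∀ E ∈ S, (E ∩ (U \ T)).card = 1)
    (hblue : ∀ E ∈ S, (E ∩ (U ∩ T)).Nonempty) :
    (∀ E'' ∈ shattered U T S, (E'' ∩ (U \ T)).card = 1) ∧
    (∀ E'' ∈ shattered U T S, E''.card ≤ 2) ∧
    ∃ M : ℤ,
      IsGreatest {mg : ℤ | ∃ A ⊆ S, tapMargin U T A = mg} M ∧
      IsGreatest {mg : ℤ | ∃ A ⊆ shattered U T S, tapMargin U T A = mg} M := by
  classical
  have hmem : ∀ E'' ∈ shattered U T S,
      ∃ E ∈ S, ∃ b ∈ E ∩ (U ∩ T), E'' = insert b (E ∩ (U \ T)) := by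
    intro E'' h
    simp only [shattered, Finset.mem_biUnion, Finset.mem_image] at h
    obtain ⟨E, hE, b, hb, rfl⟩ := h
    exact ⟨E, hE, b, hb, rfl⟩
  have part1 : ∀ E'' ∈ shattered U T S, (E'' ∩ (U \ T)).card = 1 := by
    intro E'' h
    obtain ⟨E, hE, b, hb, rfl⟩ := hmem E'' h
    have hbT : b ∈ T := (Finset.mem_inter.mp (Finset.mem_inter.mp hb).2).2
    have hbR : b ∉ U \ T := fun hc => (Finset.mem_sdiff.mp hc).2 hbT
    rw [Finset.insert_inter_of_notMem hbR, Finset.inter_assoc, Finset.inter_self]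
    exact honered E hE
  refine ⟨part1, ?_, ?_⟩
  · intro E'' h
    obtain ⟨E, hE, b, hb, rfl⟩ := hmem E'' h
    calc (insert b (E ∩ (U \ T))).card ≤ (E ∩ (U \ T)).card + 1 :=
          Finset.card_insert_le _ _
      _ ≤ 2 := by rw [honered E hE]
  -- union of shattered subcollection equals union of original
  have unionA : ∀ A ⊆ S, (shattered U T A).biUnion id = A.biUnion id := by
    intro A hA
    ext x
    simp only [shattered, Finset.mem_biUnion, Finset.mem_image, id]
    constructor
    · rintro ⟨E'', ⟨E, hE, b, hb, rfl⟩, hx⟩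
      refine ⟨E, hE, ?_⟩
      rcases Finset.mem_insert.mp hx with rfl | hx
      · exact (Finset.mem_inter.mp hb).1
      · exact (Finset.mem_inter.mp hx).1
    · rintro ⟨E, hE, hx⟩
      have hEU : E ⊆ U := (hS E (hA hE)).2
      by_cases hT : x ∈ T
      · exact ⟨_, ⟨E, hE, x,
          Finset.mem_inter.mpr ⟨hx, Finset.mem_inter.mpr ⟨hEU hx, hT⟩⟩, rfl⟩,
          Finset.mem_insert_self _ _⟩
      · obtain ⟨b, hb⟩ := hblue E (hA hE)
        exact ⟨_, ⟨E, hE, b, hb, rfl⟩, Finset.mem_insert_of_mem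
          (Finset.mem_inter.mpr ⟨hx, Finset.mem_sdiff.mpr ⟨hEU hx, hT⟩⟩)⟩
  have marginA : ∀ A ⊆ S, tapMargin U T (shattered U T A) = tapMargin U T A := by
    intro A hA
    unfold tapMargin
    rw [unionA A hA]
  have shatsub : ∀ A ⊆ S, shattered U T A ⊆ shattered U T S := by
    intro A hA
    exact Finset.biUnion_subset_biUnion_of_subset_left _ hA
  -- lemma B
  have lemB : ∀ A'' ⊆ shattered U T S, ∃ A ⊆ S, tapMargin U T A'' ≤ tapMargin U T A := by
    intro A'' hA''
    set P : Finset α → Prop := fun E => ∃ E'' ∈ A'', E'' ⊆ E ∧ E ∩ (U \ T) ⊆ E'' with hP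
    refine ⟨S.filter P, Finset.filter_subset _ _, ?_⟩
    set W'' := A''.biUnion id with hW''
    set W := (S.filter P).biUnion id with hW
    have hsub : W'' ⊆ W := by
      intro x hx
      obtain ⟨E'', hE'', hxE''⟩ := Finset.mem_biUnion.mp hx
      obtain ⟨E, hE, b, hb, rfl⟩ := hmem E'' (hA'' hE'')
      have h1 : insert b (E ∩ (U \ T)) ⊆ E := by
        intro y hy
        rcases Finset.mem_insert.mp hy with rfl | hy
        · exact (Finset.mem_inter.mp hb).1
        · exact (Finset.mem_inter.mp hy).1
      have hEP : E ∈ S.filter P :=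
        Finset.mem_filter.mpr ⟨hE, ⟨_, hE'', h1, Finset.subset_insert _ _⟩⟩
      exact Finset.mem_biUnion.mpr ⟨E, hEP, h1 hxE''⟩
    have hred : W ∩ (U \ T) ⊆ W'' ∩ (U \ T) := by
      intro x hx
      obtain ⟨hxW, hxR⟩ := Finset.mem_inter.mp hx
      obtain ⟨E, hE, hxE⟩ := Finset.mem_biUnion.mp hxW
      obtain ⟨hES, E'', hE'', hsub', hred'⟩ := Finset.mem_filter.mp hE
      have : x ∈ E'' := hred' (Finset.mem_inter.mpr ⟨hxE, hxR⟩)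
      exact Finset.mem_inter.mpr ⟨Finset.mem_biUnion.mpr ⟨E'', hE'', this⟩, hxR⟩
    simp only [tapMargin, ← hW'', ← hW]
    have h1 : (W'' ∩ (U ∩ T)).card ≤ (W ∩ (U ∩ T)).card :=
      Finset.card_le_card (Finset.inter_subset_inter_right hsub)
    have h2 : (W ∩ (U \ T)).card ≤ (W'' ∩ (U \ T)).card := Finset.card_le_card hred
    omega
  -- the maximum
  have hne : (S.powerset.image (tapMargin U T)).Nonempty :=
    ⟨tapMargin U T ∅, Finset.mem_image.mpr ⟨∅, Finset.empty_mem_powerset _, rfl⟩⟩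
  set M := (S.powerset.image (tapMargin U T)).max' hne with hM
  obtain ⟨A₀, hA₀, hA₀M⟩ := Finset.mem_image.mp ((S.powerset.image (tapMargin U T)).max'_mem hne)
  have hA₀S : A₀ ⊆ S := Finset.mem_powerset.mp hA₀
  have hub : ∀ A ⊆ S, tapMargin U T A ≤ M := by
    intro A hA
    exact Finset.le_max' _ _ (Finset.mem_image.mpr ⟨A, Finset.mem_powerset.mpr hA, rfl⟩)
  refine ⟨M, ⟨⟨A₀, hA₀S, hA₀M⟩, ?_⟩, ⟨⟨shattered U T A₀, shatsub A₀ hA₀S, by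
      rw [marginA A₀ hA₀S]; exact hA₀M⟩, ?_⟩⟩
  · rintro mg ⟨A, hA, rfl⟩
    exact hub A hA
  · rintro mg ⟨A'', hA'', rfl⟩
    obtain ⟨A, hA, hle⟩ := lemB A'' hA''
    exact hle.trans (hub A hA)
end

section
/- For any greedy execution C_1, …, C_g of the greedy algorithm for unweighted Set Cover, the number m_i of elements newly covered at step i satisfies m_i ≥ ⌈(n − Σ_{j=1}^{i−1} m_j) / OPT⌉ for every i with 1 ≤ i ≤ g. -/
theorem stmt_12 {β : Type*} [DecidableEq β] (X : Finset β) (𝒞 : Finset (Finset β))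
    (h𝒞 : ∀ D ∈ 𝒞, D ⊆ X) (hcov : ∀ x ∈ X, ∃ D ∈ 𝒞, x ∈ D)
    (OPT : ℕ)
    (hOPT : IsLeast {k : ℕ | ∃ D ⊆ 𝒞, (∀ x ∈ X, ∃ C ∈ D, x ∈ C) ∧ D.card = k} OPT)
    (g : ℕ) (C : Fin g → Finset β) (hC : ∀ i, C i ∈ 𝒞)
    (m : Fin g → ℕ)
    (hm : ∀ i, m i = (C i \ (Finset.univ.filter (fun j => j < i)).biUnion C).card)
    (hpos : ∀ i, 0 < m i)
    (hmax : ∀ i, ∀ D ∈ 𝒞, (D \ (Finset.univ.filter (fun j => j < i)).biUnion C).card ≤ m i)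
    (hall : ∀ x ∈ X, ∃ i, x ∈ C i) :
    ∀ i : Fin g,
      ⌈((X.card : ℚ) - ∑ j ∈ Finset.univ.filter (fun j => j < i), (m j : ℚ)) / (OPT : ℚ)⌉
        ≤ (m i : ℤ) := by
  -- key: sum of m j over j < k equals card of covered set
  have key : ∀ k : ℕ, k ≤ g →
      (∑ j ∈ Finset.univ.filter (fun j : Fin g => j.1 < k), m j)
        = ((Finset.univ.filter (fun j : Fin g => j.1 < k)).biUnion C).card := by
    intro k
    induction k with
    | zero =>
      intro _
      simp
    | succ k ih =>
      intro hk
      have hk' : k < g := hk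
      have hkg : k ≤ g := le_of_lt hk'
      set i0 : Fin g := ⟨k, hk'⟩ with hi0
      have hfilt : Finset.univ.filter (fun j : Fin g => j.1 < k + 1)
          = insert i0 (Finset.univ.filter (fun j : Fin g => j.1 < k)) := by
        ext j
        simp only [Finset.mem_filter, Finset.mem_univ, true_and, Finset.mem_insert]
        constructor
        · intro h
          rcases Nat.lt_succ_iff_lt_or_eq.mp h with h | h
          · exact Or.inr h
          · exact Or.inl (Fin.ext h)
        · rintro (h | h)
          · rw [h]; exact Nat.lt_succ_self k
          · exact Nat.lt_succ_of_lt h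
      have hnotmem : i0 ∉ Finset.univ.filter (fun j : Fin g => j.1 < k) := by
        simp [hi0]
      have hfilt2 : Finset.univ.filter (fun j : Fin g => j < i0)
          = Finset.univ.filter (fun j : Fin g => j.1 < k) := by
        rfl
      rw [hfilt, Finset.sum_insert hnotmem, Finset.biUnion_insert, ih hkg,
        hm i0, hfilt2]
      rw [← Finset.card_sdiff_add_card]
  intro i
  have hfi : Finset.univ.filter (fun j : Fin g => j < i)
      = Finset.univ.filter (fun j : Fin g => j.1 < i.1) := rfl
  set P : Finset β := (Finset.univ.filter (fun j : Fin g => j < i)).biUnion C with hPdef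
  have hsum : (∑ j ∈ Finset.univ.filter (fun j : Fin g => j < i), m j) = P.card := by
    rw [hPdef, hfi]
    exact key i.1 (le_of_lt i.2)
  have hPX : P ⊆ X := by
    intro x hx
    rw [hPdef] at hx
    rcases Finset.mem_biUnion.mp hx with ⟨j, _, hj⟩
    exact h𝒞 (C j) (hC j) hj
  -- X nonempty
  have hXne : X.Nonempty := by
    have := hpos i
    rw [hm i] at this
    rcases Finset.card_pos.mp this with ⟨x, hx⟩
    exact ⟨x, h𝒞 (C i) (hC i) (Finset.mem_sdiff.mp hx).1⟩
  obtain ⟨⟨D, hDsub, hDcov, hDcard⟩, _⟩ := hOPT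
  have hOPTpos : 0 < OPT := by
    rcases Nat.eq_zero_or_pos OPT with h | h
    swap
    · exact h
    · exfalso
      rw [h, Finset.card_eq_zero] at hDcard
      rcases hXne with ⟨x, hx⟩
      rcases hDcov x hx with ⟨E, hE, _⟩
      rw [hDcard] at hE
      exact absurd hE (Finset.notMem_empty E)
  -- (X \ P) ⊆ union of E \ P over E in D
  have hsub : X \ P ⊆ D.biUnion (fun E => E \ P) := by
    intro x hx
    rcases Finset.mem_sdiff.mp hx with ⟨hxX, hxP⟩
    rcases hDcov x hxX with ⟨E, hE, hxE⟩
    exact Finset.mem_biUnion.mpr ⟨E, hE, Finset.mem_sdiff.mpr ⟨hxE, hxP⟩⟩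
  have hbound : (X \ P).card ≤ OPT * m i := by
    calc (X \ P).card ≤ (D.biUnion (fun E => E \ P)).card := Finset.card_le_card hsub
      _ ≤ ∑ E ∈ D, (E \ P).card := Finset.card_biUnion_le
      _ ≤ ∑ _E ∈ D, m i := Finset.sum_le_sum (fun E hE => hmax i E (hDsub hE))
      _ = OPT * m i := by rw [Finset.sum_const, hDcard, smul_eq_mul]
  have hcardR : (X \ P).card = X.card - P.card := Finset.card_sdiff_of_subset hPX
  have hPle : P.card ≤ X.card := Finset.card_le_card hPX
  rw [Int.ceil_le]
  push_cast
  rw [div_le_iff₀ (by exact_mod_cast hOPTpos : (0:ℚ) < OPT)]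
  have h1 : (X.card : ℚ) - ∑ j ∈ Finset.univ.filter (fun j : Fin g => j < i), (m j : ℚ)
      = ((X \ P).card : ℚ) := by
    rw [hcardR, Nat.cast_sub hPle, ← hsum]
    push_cast
    ring
  rw [h1]
  calc ((X \ P).card : ℚ) ≤ (OPT * m i : ℕ) := by exact_mod_cast hbound
    _ = (m i : ℚ) * OPT := by push_cast; ring
end

section
/- Let K = ⌈(n − OPT_SC)/2⌉. Then for any greedy execution r_1, …, r_g on a one-red instance, the number of blue features covered by the first min(K, g) chosen red features is at least 2K, i.e., Σ_{i=1}^{min(K,g)} m_i ≥ 2K. -/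
/-- The set of blue features covered by the red feature `r`: those blue features
appearing together with `r` in some exemplar of `S`. -/
def blueCov {α : Type*} [DecidableEq α] (U T : Finset α) (S : Finset (Finset α)) (r : α) :
    Finset α :=
  (U ∩ T).filter (fun b => ∃ E ∈ S, r ∈ E ∧ b ∈ E)

/-- The set of blue features covered by the red features chosen before step `i`
of a greedy execution `r`. -/
def prevCov {α : Type*} [DecidableEq α] (U T : Finset α) (S : Finset (Finset α))
    (g : ℕ) (r : Fin g → α) (i : Fin g) : Finset α :=
  (Finset.univ.filter (fun j => j < i)).biUnion (fun j => blueCov U T S (r j))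

/-- `r : Fin g → α` is a greedy execution on the (one-red) TAP instance `(U, T, S)`:
each `r i` is a red feature covering a positive, maximal number of blue features not
covered by `r 0, …, r (i-1)`, and together the `r i` cover all blue features. -/
def IsGreedyExec {α : Type*} [DecidableEq α] (U T : Finset α) (S : Finset (Finset α))
    (g : ℕ) (r : Fin g → α) : Prop :=
  (∀ i, r i ∈ U \ T) ∧
  (∀ i, 0 < ((blueCov U T S (r i)) \ prevCov U T S g r i).card) ∧
  (∀ i, ∀ r' ∈ U \ T,
    ((blueCov U T S r') \ prevCov U T S g r i).card ≤
      ((blueCov U T S (r i)) \ prevCov U T S g r i).card) ∧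
  (∀ b ∈ U ∩ T, ∃ i, b ∈ blueCov U T S (r i))

section Aux

variable {α : Type*} [DecidableEq α] (U T : Finset α) (S : Finset (Finset α))
  (g : ℕ) (r : Fin g → α)

lemma blueCov_subset (r' : α) : blueCov U T S r' ⊆ U ∩ T :=
  Finset.filter_subset _ _

lemma prevCov_subset (i : Fin g) : prevCov U T S g r i ⊆ U ∩ T := by
  intro b hb
  simp only [prevCov, Finset.mem_biUnion] at hb
  obtain ⟨j, _, hb⟩ := hb
  exact blueCov_subset U T S _ hb

lemma prevCov_mono {i j : Fin g} (h : i ≤ j) :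
    prevCov U T S g r i ⊆ prevCov U T S g r j := by
  apply Finset.biUnion_subset_biUnion_of_subset_left
  intro k hk
  simp only [Finset.mem_filter, Finset.mem_univ, true_and] at hk ⊢
  exact lt_of_lt_of_le hk h

lemma blueCov_subset_prevCov {j i : Fin g} (h : j < i) :
    blueCov U T S (r j) ⊆ prevCov U T S g r i := by
  intro x hx
  simp only [prevCov, Finset.mem_biUnion, Finset.mem_filter, Finset.mem_univ, true_and]
  exact ⟨j, h, hx⟩

/-- least-index covering: every blue covered at all lies in some "gain" set. -/
lemma exists_gain (b : α) {i : Fin g} (hb : b ∈ blueCov U T S (r i)) :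
    ∃ j : Fin g, j ≤ i ∧ b ∈ blueCov U T S (r j) \ prevCov U T S g r j := by
  classical
  have hex : ∃ k, ∃ hk : k < g, b ∈ blueCov U T S (r ⟨k, hk⟩) :=
    ⟨i.1, i.2, by simpa using hb⟩
  obtain ⟨hk, hbk⟩ := Nat.find_spec hex
  refine ⟨⟨Nat.find hex, hk⟩, ?_, Finset.mem_sdiff.mpr ⟨hbk, ?_⟩⟩
  · exact Nat.find_le ⟨i.2, by simpa using hb⟩
  · intro hmem
    simp only [prevCov, Finset.mem_biUnion, Finset.mem_filter, Finset.mem_univ,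
      true_and] at hmem
    obtain ⟨j', hj', hbj'⟩ := hmem
    exact Nat.find_min hex hj' ⟨j'.2, by simpa using hbj'⟩

lemma prevCov_eq (i : Fin g) :
    prevCov U T S g r i = (Finset.univ.filter (fun j => j < i)).biUnion
      (fun j => blueCov U T S (r j) \ prevCov U T S g r j) := by
  ext b
  simp only [prevCov, Finset.mem_biUnion, Finset.mem_filter, Finset.mem_univ, true_and]
  constructor
  · rintro ⟨j, hj, hb⟩
    obtain ⟨j', hj', hbj'⟩ := exists_gain U T S g r b hb
    exact ⟨j', lt_of_le_of_lt hj' hj, hbj'⟩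
  · rintro ⟨j, hj, hb⟩
    exact ⟨j, hj, (Finset.mem_sdiff.mp hb).1⟩

lemma gain_pairwise_disjoint :
    ∀ x : Fin g, ∀ y : Fin g, x ≠ y →
      Disjoint (blueCov U T S (r x) \ prevCov U T S g r x)
        (blueCov U T S (r y) \ prevCov U T S g r y) := by
  have key : ∀ x y : Fin g, x < y →
      Disjoint (blueCov U T S (r x) \ prevCov U T S g r x)
        (blueCov U T S (r y) \ prevCov U T S g r y) := by
    intro x y hxy
    rw [Finset.disjoint_left]
    intro a ha hay
    have h1 : a ∈ prevCov U T S g r y :=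
      blueCov_subset_prevCov U T S g r hxy (Finset.mem_sdiff.mp ha).1
    exact (Finset.mem_sdiff.mp hay).2 h1
  intro x y hxy
  rcases lt_or_gt_of_ne hxy with h | h
  · exact key x y h
  · exact (key y x h).symm

lemma card_prevCov (i : Fin g) :
    (prevCov U T S g r i).card = ∑ j ∈ Finset.univ.filter (fun j => j < i),
      (blueCov U T S (r j) \ prevCov U T S g r j).card := by
  rw [prevCov_eq]
  exact Finset.card_biUnion (fun x _ y _ h => gain_pairwise_disjoint U T S g r x y h)

lemma total_cov (hg4 : ∀ b ∈ U ∩ T, ∃ i, b ∈ blueCov U T S (r i)) :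
    (Finset.univ : Finset (Fin g)).biUnion
      (fun j => blueCov U T S (r j) \ prevCov U T S g r j) = U ∩ T := by
  ext b
  simp only [Finset.mem_biUnion, Finset.mem_univ, true_and]
  constructor
  · rintro ⟨j, hb⟩
    exact blueCov_subset U T S _ (Finset.mem_sdiff.mp hb).1
  · intro hb
    obtain ⟨i, hi⟩ := hg4 b hb
    obtain ⟨j, _, hj⟩ := exists_gain U T S g r b hi
    exact ⟨j, hj⟩

lemma card_filter_lt_fin (m : ℕ) (h : m ≤ g) :
    (Finset.univ.filter (fun i : Fin g => (i : ℕ) < m)).card = m := by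
  have key : (Finset.univ.filter (fun i : Fin g => (i : ℕ) < m)).card
      = (Finset.range m).card := by
    refine Finset.card_bij (fun (i : Fin g) (_ : i ∈ Finset.univ.filter (fun i : Fin g => (i : ℕ) < m)) => (i : ℕ)) ?_ ?_ ?_
    · intro a ha
      simp only [Finset.mem_filter] at ha
      simpa using ha.2
    · intro a _ b _ hab
      exact Fin.val_injective hab
    · intro b hb
      simp only [Finset.mem_range] at hb
      exact ⟨⟨b, lt_of_lt_of_le hb h⟩, by simpa using hb, rfl⟩
  rw [key, Finset.card_range]

end Aux

theorem stmt_13 {α : Type*} [DecidableEq α] (U T : Finset α) (hTU : T ⊆ U)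
    (S : Finset (Finset α)) (hS : ∀ E ∈ S, E.Nonempty ∧ E ⊆ U)
    (honered : ∀ E ∈ S, (E ∩ (U \ T)).card = 1)
    (hblue : ∀ b ∈ U ∩ T, ∃ E ∈ S, b ∈ E)
    (OPT : ℕ)
    (hOPT : IsLeast {k : ℕ | ∃ Rs ⊆ U \ T,
        (∀ b ∈ U ∩ T, ∃ r' ∈ Rs, ∃ E ∈ S, r' ∈ E ∧ b ∈ E) ∧ Rs.card = k} OPT)
    (g : ℕ) (r : Fin g → α) (hgreedy : IsGreedyExec U T S g r)
    (K : ℕ) (hK : K = ((U ∩ T).card - OPT + 1) / 2) :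
    2 * K ≤ ∑ i ∈ Finset.univ.filter (fun i : Fin g => (i : ℕ) < min K g),
        ((blueCov U T S (r i)) \ prevCov U T S g r i).card := by
  classical
  obtain ⟨hred, hpos, hmax, hcov⟩ := hgreedy
  obtain ⟨⟨Rs, hRsSub, hRsCov, hRsCard⟩, hleast⟩ := hOPT
  -- bound via the optimal cover
  have hoptbound : ∀ i : Fin g, (U ∩ T).card ≤ (prevCov U T S g r i).card + OPT * ((blueCov U T S (r i)) \ prevCov U T S g r i).card := by
    intro i
    have hsub : (U ∩ T) \ prevCov U T S g r i ⊆
        Rs.biUnion (fun r' => blueCov U T S r' \ prevCov U T S g r i) := by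
      intro b hb
      rw [Finset.mem_sdiff] at hb
      obtain ⟨r', hr', E, hE, hrE, hbE⟩ := hRsCov b hb.1
      simp only [Finset.mem_biUnion]
      refine ⟨r', hr', Finset.mem_sdiff.mpr ⟨?_, hb.2⟩⟩
      simp only [blueCov, Finset.mem_filter]
      exact ⟨hb.1, E, hE, hrE, hbE⟩
    have h1 : ((U ∩ T) \ prevCov U T S g r i).card ≤ OPT * ((blueCov U T S (r i)) \ prevCov U T S g r i).card := by
      calc ((U ∩ T) \ prevCov U T S g r i).card
          ≤ (Rs.biUnion (fun r' => blueCov U T S r' \ prevCov U T S g r i)).card :=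
            Finset.card_le_card hsub
        _ ≤ ∑ r' ∈ Rs, (blueCov U T S r' \ prevCov U T S g r i).card :=
            Finset.card_biUnion_le
        _ ≤ ∑ _r' ∈ Rs, ((blueCov U T S (r i)) \ prevCov U T S g r i).card := Finset.sum_le_sum (fun r' hr' => hmax i r' (hRsSub hr'))
        _ = OPT * ((blueCov U T S (r i)) \ prevCov U T S g r i).card := by rw [Finset.sum_const, smul_eq_mul, hRsCard]
    have h2 : ((U ∩ T) \ prevCov U T S g r i).card + (prevCov U T S g r i).card = (U ∩ T).card :=
      Finset.card_sdiff_add_card_eq_card (prevCov_subset U T S g r i)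
    omega
  have hO : (U ∩ T).card = 0 ∨ 1 ≤ OPT := by
    rcases Finset.eq_empty_or_nonempty (U ∩ T) with h | ⟨b, hb⟩
    · left; simp [h]
    · right
      obtain ⟨r', hr', _⟩ := hRsCov b hb
      rw [← hRsCard]
      exact Finset.card_pos.mpr ⟨r', hr'⟩
  by_cases hgK : g ≤ K
  · -- the greedy finishes within K steps: the sum is all of n, and 2K ≤ n
    have hfilter : Finset.univ.filter (fun i : Fin g => (i : ℕ) < min K g)
        = Finset.univ := by
      apply Finset.filter_true_of_mem
      intro i _
      exact lt_of_lt_of_le i.2 (le_min hgK le_rfl)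
    have hsum : ∑ i ∈ (Finset.univ : Finset (Fin g)),
        ((blueCov U T S (r i)) \ prevCov U T S g r i).card = (U ∩ T).card := by
      rw [← total_cov U T S g r hcov,
        Finset.card_biUnion (fun x _ y _ h => gain_pairwise_disjoint U T S g r x y h)]
    rw [hfilter, hsum]
    omega
  · push_neg at hgK
    have hKg : K ≤ g := le_of_lt hgK
    have hminK : min K g = K := min_eq_left hKg
    by_cases hall : ∀ i : Fin g, (i : ℕ) < K →
        2 ≤ ((blueCov U T S (r i)) \ prevCov U T S g r i).card
    · -- every one of the first K gains is at least 2
      have hcard : (Finset.univ.filter (fun i : Fin g => (i : ℕ) < min K g)).card = K := by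
        rw [hminK]; exact card_filter_lt_fin g K hKg
      calc 2 * K = (Finset.univ.filter (fun i : Fin g => (i : ℕ) < min K g)).card • 2 := by
            rw [hcard]; ring
        _ ≤ ∑ i ∈ Finset.univ.filter (fun i : Fin g => (i : ℕ) < min K g),
            ((blueCov U T S (r i)) \ prevCov U T S g r i).card := by
            apply Finset.card_nsmul_le_sum
            intro i hi
            simp only [Finset.mem_filter, hminK] at hi
            exact hall i hi.2
    · push_neg at hall
      obtain ⟨i0, hi0K, hi0m⟩ := hall
      have hm1 : ((blueCov U T S (r i0)) \ prevCov U T S g r i0).card = 1 := by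
        have := hpos i0; omega
      have hb1 : (U ∩ T).card ≤ (prevCov U T S g r i0).card + OPT := by
        have := hoptbound i0; rw [hm1] at this; omega
      set A1 := Finset.univ.filter (fun j : Fin g => j < i0) with hA1
      set A2 := Finset.univ.filter (fun i : Fin g => i0 ≤ i ∧ (i : ℕ) < K) with hA2
      have hA : Finset.univ.filter (fun i : Fin g => (i : ℕ) < min K g) = A1 ∪ A2 := by
        ext i
        simp only [hA1, hA2, Finset.mem_filter, Finset.mem_univ, true_and,
          Finset.mem_union, hminK, Fin.lt_def, Fin.le_def]
        omega
      have hdisj : Disjoint A1 A2 := by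
        rw [Finset.disjoint_left]
        intro i h1 h2
        simp only [hA1, Finset.mem_filter, Finset.mem_univ, true_and] at h1
        simp only [hA2, Finset.mem_filter, Finset.mem_univ, true_and] at h2
        exact absurd h1 (not_lt.mpr h2.1)
      have hsum1 : ∑ i ∈ A1, ((blueCov U T S (r i)) \ prevCov U T S g r i).card
          = (prevCov U T S g r i0).card :=
        (card_prevCov U T S g r i0).symm
      have hcard2 : A2.card = K - (i0 : ℕ) := by
        have he : A2 = (Finset.univ.filter (fun i : Fin g => (i : ℕ) < K)) \
            (Finset.univ.filter (fun i : Fin g => (i : ℕ) < (i0 : ℕ))) := by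
          ext i
          simp only [hA2, Finset.mem_filter, Finset.mem_univ, true_and,
            Finset.mem_sdiff, Fin.le_def, not_lt]
          omega
        rw [he, Finset.card_sdiff_of_subset, card_filter_lt_fin g K hKg,
          card_filter_lt_fin g (i0 : ℕ) (le_of_lt i0.2)]
        intro i hi
        simp only [Finset.mem_filter, Finset.mem_univ, true_and] at hi ⊢
        omega
      have hsum2 : K - (i0 : ℕ) ≤ ∑ i ∈ A2,
          ((blueCov U T S (r i)) \ prevCov U T S g r i).card := by
        calc K - (i0 : ℕ) = A2.card • 1 := by rw [hcard2]; ring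
          _ ≤ _ := Finset.card_nsmul_le_sum _ _ _ (fun i _ => hpos i)
      rw [hA, Finset.sum_union hdisj, hsum1]
      omega
end

section
/- Let a ≥ 1 and let φ be a CNF formula with n variables and m clauses in which every variable occurs (as a positive or negative literal, counted over all clauses) in at most a clauses. Then in the TAP instance constructed from φ with ⌊a/2⌋ penalty features per exemplar and ⌊a/2⌋ reward features per variable, the maximum margin over all subcollections of exemplars equals the maximum, over all truth assignments ρ, of the number of clauses of φ satisfied by ρ. -/
set_option synthInstance.maxSize 400

open Finset

variable {n m P Q : ℕ}

/-- covered clauses -/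
def cov (c : Fin m → Finset (Fin n × Bool)) (A : Finset (Fin n × Bool)) : Finset (Fin m) :=
  Finset.univ.filter (fun j => ∃ p ∈ A, p ∈ c j)

lemma blue_part (c : Fin m → Finset (Fin n × Bool)) (A : Finset (Fin n × Bool)) :
    (A.biUnion (fun p => cnfEx n m P Q c p.1 p.2)) ∩ cnfBlue n m P Q =
      ((cov c A).image Sum.inl) ∪
      (((A.image Prod.fst) ×ˢ (Finset.univ : Finset (Fin Q))).image
        (fun q => Sum.inr (Sum.inr q))) := by
  ext x
  rcases x with j | ⟨⟨⟨i, b⟩, p⟩ | ⟨i, q⟩⟩ <;>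
    simp [cnfEx, cnfBlue, cov, and_comm]

lemma red_part (c : Fin m → Finset (Fin n × Bool)) (A : Finset (Fin n × Bool)) :
    (A.biUnion (fun p => cnfEx n m P Q c p.1 p.2)) \ cnfBlue n m P Q =
      (A ×ˢ (Finset.univ : Finset (Fin P))).image (fun x => Sum.inr (Sum.inl x)) := by
  ext x
  rcases x with j | ⟨⟨⟨i, b⟩, p⟩ | ⟨i, q⟩⟩ <;>
    simp [cnfEx, cnfBlue]

lemma margin_formula_s16 (c : Fin m → Finset (Fin n × Bool)) (A : Finset (Fin n × Bool)) :
    tapMargin (Finset.univ) (cnfBlue n m P Q)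
      (A.image (fun p => cnfEx n m P Q c p.1 p.2)) =
      ((cov c A).card : ℤ) + Q * (A.image Prod.fst).card - P * A.card := by
  have hb : (A.image (fun p => cnfEx n m P Q c p.1 p.2)).biUnion id =
      A.biUnion (fun p => cnfEx n m P Q c p.1 p.2) := by
    exact Finset.image_biUnion
  rw [tapMargin, hb, Finset.univ_inter]
  have hsd : ∀ W : Finset (CnfFeat n m P Q),
      W ∩ (Finset.univ \ cnfBlue n m P Q) = W \ cnfBlue n m P Q := by
    intro W; ext x; simp [Finset.mem_sdiff]
  rw [hsd, blue_part, red_part]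
  rw [Finset.card_union_of_disjoint, Finset.card_image_of_injective _ Sum.inl_injective,
    Finset.card_image_of_injective, Finset.card_image_of_injective,
    Finset.card_product, Finset.card_product]
  · simp [Finset.card_univ]; push_cast; ring
  · intro x y h; simpa using h
  · intro x y h; simpa using h
  · simp only [Finset.disjoint_left, Finset.mem_image]
    rintro x ⟨j, _, rfl⟩ ⟨q, _, h⟩
    exact absurd h (by simp)

lemma bool_filter_card (q : Bool → Prop) [DecidablePred q] :
    ((Finset.univ : Finset Bool).filter q).card
      = (if q true then 1 else 0) + (if q false then 1 else 0) := by
  have h : (Finset.univ : Finset Bool) = {true, false} := by decide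
  rw [h, Finset.filter_insert, Finset.filter_singleton]
  by_cases h1 : q true <;> by_cases h2 : q false <;> simp [h1, h2]

lemma card_A_split (A : Finset (Fin n × Bool)) :
    A.card = (A.image Prod.fst).card
      + (Finset.univ.filter (fun i : Fin n => (i, true) ∈ A ∧ (i, false) ∈ A)).card := by
  have hA : A.card = ∑ i : Fin n, (Finset.univ.filter (fun b => (i, b) ∈ A)).card := by
    rw [Finset.card_eq_sum_card_fiberwise (f := Prod.fst) (t := Finset.univ)
      (fun _ _ => Finset.mem_univ _)]
    refine Finset.sum_congr rfl (fun i _ => ?_)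
    rw [show A.filter (fun p => p.1 = i)
        = (Finset.univ.filter (fun b => (i, b) ∈ A)).image (fun b => (i, b)) by
      ext ⟨i', b⟩; simp; aesop]
    exact Finset.card_image_of_injective _ (fun x y h => by simpa using h)
  have hV : (A.image Prod.fst) = Finset.univ.filter (fun i : Fin n => ∃ b, (i, b) ∈ A) := by
    ext i
    simp only [Finset.mem_image, Finset.mem_filter, Finset.mem_univ, true_and]
    constructor
    · rintro ⟨⟨i', b⟩, h, rfl⟩; exact ⟨b, h⟩
    · rintro ⟨b, hb⟩; exact ⟨(i, b), hb, rfl⟩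
  rw [hA, hV, Finset.card_filter, Finset.card_filter]
  rw [← Finset.sum_add_distrib]
  refine Finset.sum_congr rfl (fun i _ => ?_)
  rw [bool_filter_card]
  by_cases h1 : (i, true) ∈ A <;> by_cases h2 : (i, false) ∈ A <;>
    simp [h1, h2]

lemma occ_pair_le (a : ℕ) (c : Fin m → Finset (Fin n × Bool)) (i : Fin n)
    (hocc : (∑ j : Fin m, ((c j).filter (fun l => l.1 = i)).card) ≤ a) :
    (Finset.univ.filter (fun j => (i, true) ∈ c j)).card
      + (Finset.univ.filter (fun j => (i, false) ∈ c j)).card ≤ a := by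
  calc (Finset.univ.filter (fun j => (i, true) ∈ c j)).card
        + (Finset.univ.filter (fun j => (i, false) ∈ c j)).card
      = ∑ j : Fin m, ((if (i, true) ∈ c j then 1 else 0)
          + (if (i, false) ∈ c j then 1 else 0)) := by
        rw [Finset.card_filter, Finset.card_filter, Finset.sum_add_distrib]
    _ ≤ ∑ j : Fin m, ((c j).filter (fun l => l.1 = i)).card := by
        apply Finset.sum_le_sum; intro j _
        by_cases h1 : (i, true) ∈ c j <;> by_cases h2 : (i, false) ∈ c j <;>
          simp only [h1, h2, if_true, if_false]
        · have hsub : ({(i, true), (i, false)} : Finset (Fin n × Bool))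
              ⊆ (c j).filter (fun l => l.1 = i) := by
            intro l hl
            simp only [Finset.mem_insert, Finset.mem_singleton] at hl
            rcases hl with rfl | rfl <;> simp [h1, h2]
          have h2' := Finset.card_le_card hsub
          rwa [Finset.card_insert_of_notMem (by simp), Finset.card_singleton] at h2'
        · have : (i, true) ∈ (c j).filter (fun l => l.1 = i) := by simp [h1]
          simpa using Finset.card_pos.mpr ⟨_, this⟩
        · have : (i, false) ∈ (c j).filter (fun l => l.1 = i) := by simp [h2]
          simpa using Finset.card_pos.mpr ⟨_, this⟩
        · simp
    _ ≤ a := hocc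

lemma cov_subset (c : Fin m → Finset (Fin n × Bool)) (A : Finset (Fin n × Bool))
    (ρ : Fin n → Bool)
    (hρ : ∀ i b, (i, b) ∈ A → (i, !b) ∉ A → ρ i = b) :
    cov c A ⊆ (Finset.univ.filter (fun j => ∃ l ∈ c j, ρ l.1 = l.2))
      ∪ (Finset.univ.filter (fun i : Fin n => (i, true) ∈ A ∧ (i, false) ∈ A)).biUnion
          (fun i => Finset.univ.filter (fun j => (i, !ρ i) ∈ c j)) := by
  intro j hj
  simp only [cov, Finset.mem_filter, Finset.mem_univ, true_and] at hj
  obtain ⟨⟨i, b⟩, hA, hcj⟩ := hj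
  simp only [Finset.mem_union, Finset.mem_filter, Finset.mem_univ, true_and,
    Finset.mem_biUnion]
  by_cases hb : ρ i = b
  · exact Or.inl ⟨(i, b), hcj, hb⟩
  · right
    have hnb : (i, !b) ∈ A := by
      by_contra h
      exact hb (hρ i b hA h)
    have hboth : (i, true) ∈ A ∧ (i, false) ∈ A := by
      cases b <;> exact ⟨by assumption, by assumption⟩
    have hib : b = (!(ρ i)) := by
      cases hρi : ρ i <;> cases b <;> simp_all
    exact ⟨i, hboth, by rw [← hib]; exact hcj⟩


theorem stmt_16 (a : ℕ) (ha : 1 ≤ a) (n m : ℕ) (c : Fin m → Finset (Fin n × Bool))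
    (hc : ∀ j, (c j).Nonempty)
    (hocc : ∀ i : Fin n, (∑ j : Fin m, ((c j).filter (fun l => l.1 = i)).card) ≤ a) :
    ∃ s : ℕ,
      IsGreatest {k : ℕ | ∃ ρ : Fin n → Bool, satCount n m c ρ = k} s ∧
      IsGreatest {mg : ℤ | ∃ S' ⊆ cnfCollection n m (a / 2) (a / 2) c,
          tapMargin (Finset.univ) (cnfBlue n m (a / 2) (a / 2)) S' = mg} (s : ℤ) := by
  classical
  obtain ⟨ρ₀, -, hρ₀⟩ := Finset.exists_max_image (Finset.univ : Finset (Fin n → Bool))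
    (satCount n m c) Finset.univ_nonempty
  refine ⟨satCount n m c ρ₀, ⟨⟨ρ₀, rfl⟩, ?_⟩, ?_, ?_⟩
  · rintro k ⟨ρ, rfl⟩; exact hρ₀ ρ (Finset.mem_univ _)
  · -- membership: the margin value is attained
    set A₀ := (Finset.univ : Finset (Fin n)).image (fun i => (i, ρ₀ i)) with hA₀
    refine ⟨A₀.image (fun p => cnfEx n m (a / 2) (a / 2) c p.1 p.2), ?_, ?_⟩
    · unfold cnfCollection
      exact Finset.image_subset_image (Finset.subset_univ _)
    · rw [margin_formula_s16]
      have h1 : cov c A₀ = Finset.univ.filter (fun j => ∃ l ∈ c j, ρ₀ l.1 = l.2) := by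
        ext j
        simp only [cov, Finset.mem_filter, Finset.mem_univ, true_and, hA₀,
          Finset.mem_image]
        constructor
        · rintro ⟨p, ⟨i, rfl⟩, hm⟩; exact ⟨(i, ρ₀ i), hm, rfl⟩
        · rintro ⟨⟨i, b⟩, hm, hb⟩
          simp only at hb
          exact ⟨(i, b), ⟨i, by rw [hb]⟩, hm⟩
      have h2 : A₀.card = n := by
        rw [hA₀, Finset.card_image_of_injective _
          (fun x y h => by simpa using congrArg Prod.fst h)]
        simp
      have h3 : A₀.image Prod.fst = Finset.univ := by
        ext i
        simp only [hA₀, Finset.mem_image, Finset.mem_univ, iff_true]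
        exact ⟨(i, ρ₀ i), ⟨i, ⟨trivial, rfl⟩⟩, rfl⟩
      rw [h1, h2, h3, Finset.card_univ, Fintype.card_fin, satCount]
      ring
  · -- upper bound
    rintro mg ⟨S', hS', rfl⟩
    set A := Finset.univ.filter
      (fun p : Fin n × Bool => cnfEx n m (a / 2) (a / 2) c p.1 p.2 ∈ S') with hA
    have hS'A : S' = A.image (fun p => cnfEx n m (a / 2) (a / 2) c p.1 p.2) := by
      ext E
      constructor
      · intro hE
        have hE' := hS' hE
        simp only [cnfCollection, Finset.mem_image, Finset.mem_univ, true_and] at hE'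
        obtain ⟨p, rfl⟩ := hE'
        exact Finset.mem_image.mpr ⟨p, Finset.mem_filter.mpr ⟨Finset.mem_univ _, hE⟩, rfl⟩
      · rintro hE
        obtain ⟨p, hp, rfl⟩ := Finset.mem_image.mp hE
        exact (Finset.mem_filter.mp hp).2
    rw [hS'A, margin_formula_s16]
    set ρ : Fin n → Bool := fun i =>
      if ((i, true) ∈ A ↔ (i, false) ∈ A)
      then decide ((Finset.univ.filter (fun j => (i, false) ∈ c j)).card
            ≤ (Finset.univ.filter (fun j => (i, true) ∈ c j)).card)
      else decide ((i, true) ∈ A) with hρdef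
    have hK1 : ∀ i b, (i, b) ∈ A → (i, !b) ∉ A → ρ i = b := by
      intro i b h1 h2
      cases b
      · have hiff : ¬((i, true) ∈ A ↔ (i, false) ∈ A) := by
          simp only [Bool.not_false] at h2; tauto
        simp only [hρdef, if_neg hiff]
        simpa using (by simpa using h2 : (i, true) ∉ A)
      · have hiff : ¬((i, true) ∈ A ↔ (i, false) ∈ A) := by
          simp only [Bool.not_true] at h2; tauto
        simp only [hρdef, if_neg hiff]
        simpa using h1
    set D := Finset.univ.filter (fun i : Fin n => (i, true) ∈ A ∧ (i, false) ∈ A) with hD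
    have hKD : ∀ i ∈ D, (Finset.univ.filter (fun j => (i, !ρ i) ∈ c j)).card ≤ a / 2 := by
      intro i hi
      have hiff : (i, true) ∈ A ↔ (i, false) ∈ A := by
        obtain ⟨h1, h2⟩ := Finset.mem_filter.mp hi
        tauto
      have hsum := occ_pair_le a c i (hocc i)
      by_cases hle : (Finset.univ.filter (fun j => (i, false) ∈ c j)).card
          ≤ (Finset.univ.filter (fun j => (i, true) ∈ c j)).card
      · have hρi : ρ i = true := by simp [hρdef, if_pos hiff, hle]
        rw [hρi]
        simp only [Bool.not_true]
        omega
      · have hρi : ρ i = false := by simp [hρdef, if_pos hiff, hle]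
        rw [hρi]
        simp only [Bool.not_false]
        omega
    have hcov : (cov c A).card ≤ satCount n m c ρ + D.card * (a / 2) := by
      calc (cov c A).card
          ≤ ((Finset.univ.filter (fun j => ∃ l ∈ c j, ρ l.1 = l.2))
            ∪ D.biUnion (fun i => Finset.univ.filter (fun j => (i, !ρ i) ∈ c j))).card :=
            Finset.card_le_card (cov_subset c A ρ hK1)
        _ ≤ (Finset.univ.filter (fun j => ∃ l ∈ c j, ρ l.1 = l.2)).card
            + (D.biUnion (fun i => Finset.univ.filter (fun j => (i, !ρ i) ∈ c j))).card :=
            Finset.card_union_le _ _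
        _ ≤ satCount n m c ρ
            + ∑ i ∈ D, (Finset.univ.filter (fun j => (i, !ρ i) ∈ c j)).card := by
            exact Nat.add_le_add le_rfl (Finset.card_biUnion_le)
        _ ≤ satCount n m c ρ + ∑ i ∈ D, (a / 2) :=
            Nat.add_le_add le_rfl (Finset.sum_le_sum hKD)
        _ = satCount n m c ρ + D.card * (a / 2) := by
            rw [Finset.sum_const, smul_eq_mul]
    have hsplit := card_A_split A
    have hsat : satCount n m c ρ ≤ satCount n m c ρ₀ := hρ₀ ρ (Finset.mem_univ _)
    have h1 : A.card = (A.image Prod.fst).card + D.card := by rw [hsplit, hD]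
    zify at hcov h1 hsat
    rw [h1]
    push_cast
    linarith
end

section
/- Let k ≥ 2, let S_1, …, S_k be pairwise disjoint finite sets, and let 𝒞 = {m_1, …, m_t} be a finite collection of k-tuples in S_1 × … × S_k. Then in the TAP instance constructed from this k-dimensional matching instance, the maximum margin over all subcollections of exemplars equals the maximum size of a matching, i.e., the maximum number of pairwise element-disjoint tuples in 𝒞 (tuples m_j, m_{j'} are element-disjoint if (m_j)_i ≠ (m_{j'})_i for every coordinate i). -/
set_option synthInstance.maxSize 400

/-- The exemplar `X_{i,m_j}` of the TAP instance built from a `k`-dimensional matching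
instance: the blue feature of the `i`-th coordinate of the tuple `m_j`, together with the
`k - 1` red features associated with `m_j`. -/
def dmEx {β : Type*} [DecidableEq β] (k t : ℕ) (tup : Fin t → Fin k → β)
    (i : Fin k) (j : Fin t) : Finset (β ⊕ (Fin t × Fin (k - 1))) :=
  insert (Sum.inl (tup j i))
    ((Finset.univ : Finset (Fin (k - 1))).image (fun p => Sum.inr (j, p)))

/-- The collection of the `k·t` exemplars `X_{i,m_j}`. -/
def dmCollection {β : Type*} [DecidableEq β] (k t : ℕ) (tup : Fin t → Fin k → β) :
    Finset (Finset (β ⊕ (Fin t × Fin (k - 1)))) :=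
  (Finset.univ : Finset (Fin k × Fin t)).image (fun p => dmEx k t tup p.1 p.2)

/-- The target (blue features): one blue feature for each element of `S_1 ∪ … ∪ S_k`. -/
def dmT {β : Type*} [DecidableEq β] (k : ℕ) (Sd : Fin k → Finset β) (t : ℕ) :
    Finset (β ⊕ (Fin t × Fin (k - 1))) :=
  ((Finset.univ : Finset (Fin k)).biUnion Sd).image Sum.inl

/-- The ground set: the blue features together with the `k − 1` red features of
each tuple. -/
def dmU {β : Type*} [DecidableEq β] (k : ℕ) (Sd : Fin k → Finset β) (t : ℕ) :
    Finset (β ⊕ (Fin t × Fin (k - 1))) :=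
  dmT k Sd t ∪ ((Finset.univ : Finset (Fin t × Fin (k - 1))).image Sum.inr)

def dmFull {β : Type*} [DecidableEq β] (k t : ℕ) (tup : Fin t → Fin k → β)
    (J : Finset (Fin t)) : Finset (Finset (β ⊕ (Fin t × Fin (k - 1)))) :=
  (Finset.univ ×ˢ J).image (fun p : Fin k × Fin t => dmEx k t tup p.1 p.2)

def dmB {β : Type*} [DecidableEq β] (k t : ℕ) (tup : Fin t → Fin k → β)
    (J : Finset (Fin t)) : Finset β :=
  J.biUnion (fun j => Finset.univ.image (tup j))

lemma dmFull_biUnion {β : Type*} [DecidableEq β] (k t : ℕ) (hk : 2 ≤ k)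
    (tup : Fin t → Fin k → β) (J : Finset (Fin t)) (x : β ⊕ (Fin t × Fin (k - 1))) :
    x ∈ (dmFull k t tup J).biUnion id ↔
      (∃ j ∈ J, ∃ i, x = Sum.inl (tup j i)) ∨
      (∃ j ∈ J, ∃ p : Fin (k-1), x = Sum.inr (j, p)) := by
  simp only [dmFull, dmEx, Finset.mem_biUnion, Finset.mem_image, Finset.mem_product,
    Finset.mem_univ, true_and, id, Finset.mem_insert]
  constructor
  · rintro ⟨E, ⟨⟨i, j⟩, hj, rfl⟩, hx⟩
    simp only [Finset.mem_insert, Finset.mem_image, Finset.mem_univ, true_and] at hx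
    rcases hx with rfl | ⟨p, rfl⟩
    · exact Or.inl ⟨j, hj, i, rfl⟩
    · exact Or.inr ⟨j, hj, p, rfl⟩
  · rintro (⟨j, hj, i, rfl⟩ | ⟨j, hj, p, rfl⟩)
    · exact ⟨_, ⟨⟨i, j⟩, hj, rfl⟩, by simp⟩
    · exact ⟨_, ⟨⟨⟨0, by omega⟩, j⟩, hj, rfl⟩, by simp⟩

lemma dmFull_margin {β : Type*} [DecidableEq β] (k : ℕ) (hk : 2 ≤ k)
    (Sd : Fin k → Finset β) (t : ℕ) (tup : Fin t → Fin k → β)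
    (htup : ∀ j i, tup j i ∈ Sd i) (J : Finset (Fin t)) :
    tapMargin (dmU k Sd t) (dmT k Sd t) (dmFull k t tup J)
      = ((dmB k t tup J).card : ℤ) - ((J.card * (k-1) : ℕ) : ℤ) := by
  have hblue : (dmFull k t tup J).biUnion id ∩ (dmU k Sd t ∩ dmT k Sd t)
      = (dmB k t tup J).image Sum.inl := by
    have hUT : dmU k Sd t ∩ dmT k Sd t = dmT k Sd t :=
      Finset.inter_eq_right.mpr Finset.subset_union_left
    rw [hUT]
    ext x
    rw [Finset.mem_inter, dmFull_biUnion k t hk]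
    simp only [dmT, dmB, Finset.mem_image, Finset.mem_biUnion, Finset.mem_univ, true_and]
    constructor
    · rintro ⟨(⟨j, hj, i, rfl⟩ | ⟨j, hj, p, rfl⟩), hT⟩
      · exact ⟨tup j i, ⟨j, hj, i, rfl⟩, rfl⟩
      · obtain ⟨y, _, h⟩ := hT; exact absurd h (by simp)
    · rintro ⟨y, ⟨j, hj, i, rfl⟩, rfl⟩
      exact ⟨Or.inl ⟨j, hj, i, rfl⟩, ⟨tup j i, ⟨i, htup j i⟩, rfl⟩⟩
  have hred : (dmFull k t tup J).biUnion id ∩ (dmU k Sd t \ dmT k Sd t)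
      = (J ×ˢ (Finset.univ : Finset (Fin (k-1)))).image Sum.inr := by
    ext x
    rw [Finset.mem_inter, dmFull_biUnion k t hk]
    simp only [Finset.mem_sdiff, dmU, dmT, Finset.mem_union, Finset.mem_image,
      Finset.mem_biUnion, Finset.mem_univ, true_and, and_true, Finset.mem_product]
    constructor
    · rintro ⟨(⟨j, hj, i, rfl⟩ | ⟨j, hj, p, rfl⟩), _, hnT⟩
      · exact absurd ⟨tup j i, ⟨i, htup j i⟩, rfl⟩ hnT
      · exact ⟨(j, p), hj, rfl⟩
    · rintro ⟨⟨j, p⟩, hj, rfl⟩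
      refine ⟨Or.inr ⟨j, hj, p, rfl⟩, Or.inr ⟨(j, p), rfl⟩, ?_⟩
      rintro ⟨y, -, h⟩; exact absurd h (by simp)
  rw [tapMargin, hblue, hred,
    Finset.card_image_of_injective _ Sum.inl_injective,
    Finset.card_image_of_injective _ Sum.inr_injective,
    Finset.card_product]
  simp

lemma dmB_card_matching {β : Type*} [DecidableEq β] {k t : ℕ}
    {Sd : Fin k → Finset β} (hdisj : ∀ i i', i ≠ i' → Disjoint (Sd i) (Sd i'))
    {tup : Fin t → Fin k → β} (htup : ∀ j i, tup j i ∈ Sd i)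
    {J : Finset (Fin t)} (hJ : ∀ j ∈ J, ∀ j' ∈ J, j ≠ j' → ∀ i, tup j i ≠ tup j' i) :
    (dmB k t tup J).card = k * J.card := by
  have heq : dmB k t tup J
      = (J ×ˢ (Finset.univ : Finset (Fin k))).image (fun p => tup p.1 p.2) := by
    ext y
    simp only [dmB, Finset.mem_biUnion, Finset.mem_image, Finset.mem_univ, true_and,
      Finset.mem_product, and_true, Prod.exists]
    constructor
    · rintro ⟨j, hj, i, rfl⟩; exact ⟨j, i, hj, rfl⟩
    · rintro ⟨j, i, hj, rfl⟩; exact ⟨j, hj, i, rfl⟩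
  rw [heq, Finset.card_image_of_injOn, Finset.card_product]
  · simp [mul_comm]
  rintro ⟨j, i⟩ hji ⟨j', i'⟩ hji' h
  replace h : tup j i = tup j' i' := h
  simp only [Finset.mem_coe, Finset.mem_product, Finset.mem_univ, and_true] at hji hji'
  have hii : i = i' := by
    by_contra hne
    exact Finset.disjoint_left.mp (hdisj i i' hne) (htup j i) (h ▸ htup j' i')
  subst hii
  have hjj : j = j' := by
    by_contra hne
    exact hJ j hji j' hji' hne i h
  simp [hjj]

lemma dmB_card_le {β : Type*} [DecidableEq β] {k t : ℕ} (hk : 2 ≤ k)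
    (tup : Fin t → Fin k → β) (J : Finset (Fin t)) :
    ∃ J' : Finset (Fin t), (∀ j ∈ J', ∀ j' ∈ J', j ≠ j' → ∀ i, tup j i ≠ tup j' i) ∧
      (dmB k t tup J).card ≤ (k-1) * J.card + J'.card := by
  classical
  induction J using Finset.strongInductionOn with
  | _ J ih =>
    by_cases hm : ∀ j ∈ J, ∀ j' ∈ J, j ≠ j' → ∀ i, tup j i ≠ tup j' i
    · refine ⟨J, hm, ?_⟩
      have h1 : (dmB k t tup J).card ≤ ∑ j ∈ J, (Finset.univ.image (tup j)).card :=
        Finset.card_biUnion_le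
      have h2 : ∑ j ∈ J, (Finset.univ.image (tup j)).card ≤ ∑ j ∈ J, k := by
        refine Finset.sum_le_sum fun j _ => ?_
        calc (Finset.univ.image (tup j)).card ≤ (Finset.univ : Finset (Fin k)).card :=
              Finset.card_image_le
          _ = k := by simp
      have h3 : ∑ j ∈ J, k = J.card * k := by simp [mul_comm]
      have h4 : (k-1) * J.card + J.card = k * J.card := by
        have : k - 1 + 1 = k := by omega
        rw [← Nat.succ_mul, Nat.succ_eq_add_one, this]
      have h5 : J.card * k = k * J.card := mul_comm _ _
      omega
    · push_neg at hm
      obtain ⟨j, hj, j', hj', hne, i, hii⟩ := hm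
      obtain ⟨J', hJ'm, hJ'le⟩ := ih (J.erase j) (Finset.erase_ssubset hj)
      refine ⟨J', hJ'm, ?_⟩
      have hsplit : dmB k t tup J
          = Finset.univ.image (tup j) ∪ dmB k t tup (J.erase j) := by
        conv_lhs => rw [← Finset.insert_erase hj]
        rw [dmB, Finset.biUnion_insert]; rfl
      have hmem : tup j i ∈ dmB k t tup (J.erase j) := by
        rw [dmB]
        exact Finset.mem_biUnion.mpr ⟨j', Finset.mem_erase.mpr ⟨fun h => hne h.symm, hj'⟩,
          Finset.mem_image.mpr ⟨i, Finset.mem_univ i, hii.symm⟩⟩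
      have hcard : (dmB k t tup J).card
          ≤ (k-1) + (dmB k t tup (J.erase j)).card := by
        rw [hsplit, ← Finset.card_sdiff_add_card]
        have hsub : Finset.univ.image (tup j) \ dmB k t tup (J.erase j)
            ⊆ (Finset.univ.image (tup j)).erase (tup j i) := by
          intro y hy
          rw [Finset.mem_sdiff] at hy
          exact Finset.mem_erase.mpr ⟨fun h => hy.2 (h ▸ hmem), hy.1⟩
        have := Finset.card_le_card hsub
        have h5 : ((Finset.univ.image (tup j)).erase (tup j i)).card
            = (Finset.univ.image (tup j)).card - 1 :=
          Finset.card_erase_of_mem (Finset.mem_image.mpr ⟨i, Finset.mem_univ i, rfl⟩)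
        have h6 : (Finset.univ.image (tup j)).card ≤ k := by
          calc (Finset.univ.image (tup j)).card ≤ (Finset.univ : Finset (Fin k)).card :=
                Finset.card_image_le
            _ = k := by simp
        omega
      have hc1 : 1 ≤ J.card := Finset.card_pos.mpr ⟨j, hj⟩
      have hce : (J.erase j).card = J.card - 1 := Finset.card_erase_of_mem hj
      rw [hce] at hJ'le
      have harith : (k-1) + (k-1) * (J.card - 1) = (k-1) * J.card := by
        have : (k-1) * (J.card - 1) + (k-1) = (k-1) * J.card := by
          rw [← Nat.mul_succ]; congr 1; omega
        omega
      omega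

lemma margin_le_full {β : Type*} [DecidableEq β] {k : ℕ} (hk : 2 ≤ k)
    {Sd : Fin k → Finset β} {t : ℕ} {tup : Fin t → Fin k → β}
    (htup : ∀ j i, tup j i ∈ Sd i)
    (S' : Finset (Finset (β ⊕ (Fin t × Fin (k - 1)))))
    (hS' : S' ⊆ dmCollection k t tup) :
    ∃ J : Finset (Fin t),
      tapMargin (dmU k Sd t) (dmT k Sd t) S'
        ≤ tapMargin (dmU k Sd t) (dmT k Sd t) (dmFull k t tup J) := by
  classical
  set J := Finset.univ.filter (fun j => ∃ i, dmEx k t tup i j ∈ S') with hJdef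
  refine ⟨J, ?_⟩
  have hsub : S' ⊆ dmFull k t tup J := by
    intro E hE
    obtain ⟨⟨i, j⟩, -, rfl⟩ := Finset.mem_image.mp (hS' hE)
    exact Finset.mem_image.mpr ⟨(i, j),
      Finset.mem_product.mpr ⟨Finset.mem_univ _,
        Finset.mem_filter.mpr ⟨Finset.mem_univ _, ⟨i, hE⟩⟩⟩, rfl⟩
  have hbi : S'.biUnion id ⊆ (dmFull k t tup J).biUnion id :=
    Finset.biUnion_subset_biUnion_of_subset_left _ hsub
  have hredeq : S'.biUnion id ∩ (dmU k Sd t \ dmT k Sd t)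
      = (dmFull k t tup J).biUnion id ∩ (dmU k Sd t \ dmT k Sd t) := by
    refine Finset.Subset.antisymm (Finset.inter_subset_inter hbi le_rfl) ?_
    intro x hx
    rw [Finset.mem_inter] at hx ⊢
    refine ⟨?_, hx.2⟩
    have hx1 := (dmFull_biUnion k t hk tup J x).mp hx.1
    rcases hx1 with ⟨j, hj, i, rfl⟩ | ⟨j, hj, p, rfl⟩
    · exfalso
      have : Sum.inl (tup j i) ∈ dmT k Sd t := by
        exact Finset.mem_image.mpr ⟨tup j i,
          Finset.mem_biUnion.mpr ⟨i, Finset.mem_univ i, htup j i⟩, rfl⟩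
      exact (Finset.mem_sdiff.mp hx.2).2 this
    · obtain ⟨i, hi⟩ := (Finset.mem_filter.mp hj).2
      exact Finset.mem_biUnion.mpr ⟨dmEx k t tup i j, hi, by simp [dmEx]⟩
  rw [tapMargin, tapMargin, hredeq]
  have : (S'.biUnion id ∩ (dmU k Sd t ∩ dmT k Sd t)).card
      ≤ ((dmFull k t tup J).biUnion id ∩ (dmU k Sd t ∩ dmT k Sd t)).card :=
    Finset.card_le_card (Finset.inter_subset_inter hbi le_rfl)
  omega

theorem stmt_17 {β : Type*} [DecidableEq β] (k : ℕ) (hk : 2 ≤ k)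
    (Sd : Fin k → Finset β) (hdisj : ∀ i i', i ≠ i' → Disjoint (Sd i) (Sd i'))
    (t : ℕ) (tup : Fin t → Fin k → β) (htup : ∀ j i, tup j i ∈ Sd i) :
    ∃ M : ℕ,
      IsGreatest {sz : ℕ | ∃ J : Finset (Fin t),
          (∀ j ∈ J, ∀ j' ∈ J, j ≠ j' → ∀ i, tup j i ≠ tup j' i) ∧ J.card = sz} M ∧
      IsGreatest {mg : ℤ | ∃ S' ⊆ dmCollection k t tup,
          tapMargin (dmU k Sd t) (dmT k Sd t) S' = mg} (M : ℤ) := by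
  classical
  set sizes := (Finset.univ.filter (fun J : Finset (Fin t) =>
      ∀ j ∈ J, ∀ j' ∈ J, j ≠ j' → ∀ i, tup j i ≠ tup j' i)).image Finset.card with hsdef
  have hne : sizes.Nonempty :=
    ⟨0, Finset.mem_image.mpr ⟨∅, Finset.mem_filter.mpr ⟨Finset.mem_univ _, by simp⟩, rfl⟩⟩
  set M := sizes.max' hne with hMdef
  obtain ⟨J₀, hJ₀f, hJ₀c⟩ := Finset.mem_image.mp (sizes.max'_mem hne)
  have hJ₀m := (Finset.mem_filter.mp hJ₀f).2
  have hboundM : ∀ J : Finset (Fin t),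
      (∀ j ∈ J, ∀ j' ∈ J, j ≠ j' → ∀ i, tup j i ≠ tup j' i) → J.card ≤ M := fun J hJ =>
    Finset.le_max' _ _ (Finset.mem_image.mpr
      ⟨J, Finset.mem_filter.mpr ⟨Finset.mem_univ _, hJ⟩, rfl⟩)
  have hk1 : ((k-1 : ℕ) : ℤ) = (k:ℤ) - 1 := by
    have h1 : 1 ≤ k := by omega
    rw [Nat.cast_sub h1]; norm_num
  refine ⟨M, ⟨⟨J₀, hJ₀m, hJ₀c⟩, ?_⟩, ⟨dmFull k t tup J₀, ?_, ?_⟩, ?_⟩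
  · rintro sz ⟨J, hJ, rfl⟩; exact hboundM J hJ
  · exact Finset.image_subset_image (Finset.subset_univ _)
  · rw [dmFull_margin k hk Sd t tup htup J₀, dmB_card_matching hdisj htup hJ₀m, hJ₀c]
    push_cast [hk1]
    ring
  · rintro mg ⟨S', hS', rfl⟩
    obtain ⟨J, hle⟩ := margin_le_full hk htup S' hS'
    obtain ⟨J', hJ'm, hJ'le⟩ := dmB_card_le hk tup J
    have h2 : (J'.card : ℤ) ≤ (M : ℤ) := by exact_mod_cast hboundM J' hJ'm
    rw [dmFull_margin k hk Sd t tup htup J] at hle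
    have h3 : ((dmB k t tup J).card : ℤ) ≤ (((k-1) * J.card + J'.card : ℕ) : ℤ) := by
      exact_mod_cast hJ'le
    push_cast [hk1] at hle h3
    linarith
end
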